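/- arXiv:math/0702128 — 2 statements merged into one kernel-verified Lean document; each statement's English description precedes it below -/
import Mathlib

section
/- Let 𝔉₂ be the completed free Lie algebra over a field k of characteristic 0 on generators X, Y. If R = R(X,Y) ∈ 𝔉₂ satisfies R(2X, Y) = 2·R(X,Y) (where R(2X,Y) denotes the image of R under the continuous Lie algebra endomorphism sending X ↦ 2X, Y ↦ Y), then R is of the form R = Σ_{m≥1} a_m (ad Y)^{m-1}(X) for some scalars a_m ∈ k. -/
open scoped BigOperators

/-- Words in the letters `X = 0`, `Y = 1`, ... -/
abbrev Word (n : ℕ) := List (Fin n)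

/-- Coefficient families of non-commutative formal power series `k⟨⟨X₁,…,Xₙ⟩⟩`:
a series is recorded by its coefficient at each word. -/
abbrev NC (k : Type*) (n : ℕ) := Word n → k

/-- The list of shuffles (with multiplicity) of two words. -/
def shuffle {α : Type*} : List α → List α → List (List α)
  | [], v => [v]
  | u, [] => [u]
  | a :: u, b :: v =>
      ((shuffle u (b :: v)).map (a :: ·)) ++ ((shuffle (a :: u) v).map (b :: ·))
  termination_by u v => u.length + v.length
  decreasing_by all_goals simp +arith +decide

variable {k : Type*}

/-- `φ` is group-like for the coproduct with `X`, `Y` primitive: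
`Δφ = φ ⊗ φ` and constant term 1, expressed coefficientwise via shuffles. -/
def IsGroupLike [CommRing k] (φ : NC k 2) : Prop :=
  φ [] = 1 ∧ ∀ u v : Word 2, φ u * φ v = ((shuffle u v).map φ).sum

/-- `φ` is Lie-like (primitive): `Δφ = φ⊗1 + 1⊗φ`, coefficientwise. -/
def IsLieLike [CommRing k] (φ : NC k 2) : Prop :=
  φ [] = 0 ∧ ∀ u v : Word 2, u ≠ [] → v ≠ [] → ((shuffle u v).map φ).sum = 0

/-- commutator group-like: group-like with vanishing coefficients of `X` and `Y`. -/
def IsCommGroupLike [CommRing k] (φ : NC k 2) : Prop :=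
  IsGroupLike φ ∧ φ [0] = 0 ∧ φ [1] = 0

/-- A degree-one element `a·T` of `A[[T]]`, modelling a degree-1 element of a
completed graded algebra. -/
noncomputable def lin {A : Type*} [Ring A] (a : A) : PowerSeries A :=
  PowerSeries.mk fun n => if n = 1 then a else 0

/-- Substitution `φ(X₁, X₂)` of a non-commutative power series `φ` at two
elements (of positive valuation) of a completed graded algebra, where the
completion is modelled by `A[[T]]` (degree `n` part = coefficient of `Tⁿ`). -/
noncomputable def substPS [CommRing k] {A : Type*} [Ring A] [Algebra k A]
    (φ : NC k 2) (P Q : PowerSeries A) : PowerSeries A :=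
  PowerSeries.mk fun n =>
    ∑ m ∈ Finset.range (n + 1), ∑ u : Fin m → Fin 2,
      φ (List.ofFn u) • PowerSeries.coeff n (((List.ofFn u).map ![P, Q]).prod)

/-- Exponential of a power series (meaningful when the constant term vanishes). -/
noncomputable def expPS (k : Type*) [Field k] {A : Type*} [Ring A] [Algebra k A]
    (s : PowerSeries A) : PowerSeries A :=
  PowerSeries.mk fun n =>
    ∑ m ∈ Finset.range (n + 1), (Nat.factorial m : k)⁻¹ • PowerSeries.coeff n (s ^ m)

/-- Coefficients of the multiplicative inverse of a power series with
constant term `1`. -/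
noncomputable def invCoeff {A : Type*} [Ring A] (s : PowerSeries A) : ℕ → A
  | 0 => 1
  | n + 1 => -∑ j : Fin (n + 1), invCoeff s j.1 * PowerSeries.coeff (n + 1 - j.1) s
  termination_by n => n
  decreasing_by exact j.2

/-- Inverse of a power series with constant term `1`. -/
noncomputable def PSInv {A : Type*} [Ring A] (s : PowerSeries A) : PowerSeries A :=
  PowerSeries.mk (invCoeff s)

/-- Relations presenting (the enveloping algebra of) the pure sphere braid Lie
algebra `𝔓₅` on 5 strings. -/
inductive P5Rel (k : Type*) [CommRing k] :
    FreeAlgebra k (Fin 5 × Fin 5) → FreeAlgebra k (Fin 5 × Fin 5) → Prop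
  | diag (i : Fin 5) : P5Rel k (FreeAlgebra.ι k (i, i)) 0
  | symm (i j : Fin 5) : P5Rel k (FreeAlgebra.ι k (i, j)) (FreeAlgebra.ι k (j, i))
  | rowsum (i : Fin 5) : P5Rel k (∑ j : Fin 5, FreeAlgebra.ι k (i, j)) 0
  | disj (i j l m : Fin 5) (h : i ≠ l ∧ i ≠ m ∧ j ≠ l ∧ j ≠ m) :
      P5Rel k (FreeAlgebra.ι k (i, j) * FreeAlgebra.ι k (l, m))
              (FreeAlgebra.ι k (l, m) * FreeAlgebra.ι k (i, j))

/-- The (graded) enveloping algebra `U𝔓₅` of the pure sphere braid Lie algebra. -/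
abbrev P5A (k : Type*) [CommRing k] := RingQuot (P5Rel k)

/-- The generator `X_{ij}` of `U𝔓₅`. -/
noncomputable def Xg (k : Type*) [CommRing k] (i j : Fin 5) : P5A k :=
  RingQuot.mkAlgHom k (P5Rel k) (FreeAlgebra.ι k (i, j))

/-- Relations presenting (the enveloping algebra of) the infinitesimal braid
("chord diagram") Lie algebra `𝔞ₙ`. -/
inductive ARel (k : Type*) [CommRing k] (n : ℕ) :
    FreeAlgebra k (Fin n × Fin n) → FreeAlgebra k (Fin n × Fin n) → Prop
  | diag (i : Fin n) : ARel k n (FreeAlgebra.ι k (i, i)) 0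
  | symm (i j : Fin n) : ARel k n (FreeAlgebra.ι k (i, j)) (FreeAlgebra.ι k (j, i))
  | comm3 (i j l : Fin n) (h : i ≠ j ∧ i ≠ l ∧ j ≠ l) :
      ARel k n (FreeAlgebra.ι k (i, j) * (FreeAlgebra.ι k (i, l) + FreeAlgebra.ι k (j, l)))
               ((FreeAlgebra.ι k (i, l) + FreeAlgebra.ι k (j, l)) * FreeAlgebra.ι k (i, j))
  | comm4 (i j l m : Fin n)
      (h : i ≠ j ∧ i ≠ l ∧ i ≠ m ∧ j ≠ l ∧ j ≠ m ∧ l ≠ m) :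
      ARel k n (FreeAlgebra.ι k (i, j) * FreeAlgebra.ι k (l, m))
               (FreeAlgebra.ι k (l, m) * FreeAlgebra.ι k (i, j))

/-- The (graded) enveloping algebra `U𝔞ₙ`. -/
abbrev AA (k : Type*) [CommRing k] (n : ℕ) := RingQuot (ARel k n)

/-- The generator `t_{ij}` of `U𝔞ₙ`. -/
noncomputable def tg (k : Type*) [CommRing k] (n : ℕ) (i j : Fin n) : AA k n :=
  RingQuot.mkAlgHom k (ARel k n) (FreeAlgebra.ι k (i, j))

/-- The series `X` (i.e. the image of the first generator) in the model
`(FreeAlgebra k (Fin 2))[[T]]` of `k⟨⟨X,Y⟩⟩`. -/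
noncomputable def XF (k : Type*) [CommRing k] : PowerSeries (FreeAlgebra k (Fin 2)) :=
  lin (FreeAlgebra.ι k (0 : Fin 2))

/-- The series `Y`. -/
noncomputable def YF (k : Type*) [CommRing k] : PowerSeries (FreeAlgebra k (Fin 2)) :=
  lin (FreeAlgebra.ι k (1 : Fin 2))

/-- The series `Z = -X-Y`. -/
noncomputable def ZF (k : Type*) [CommRing k] : PowerSeries (FreeAlgebra k (Fin 2)) :=
  -XF k - YF k

/-- `φ(X_{ab}, X_{bc})` in the completed `U𝔓₅`. -/
noncomputable def S5 (k : Type*) [Field k] (φ : NC k 2) (a b c : Fin 5) :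
    PowerSeries (P5A k) :=
  substPS φ (lin (Xg k a b)) (lin (Xg k b c))

/-- The multiplicative 5-cycle relation
`φ(X₁₂,X₂₃)φ(X₃₄,X₄₅)φ(X₅₁,X₁₂)φ(X₂₃,X₃₄)φ(X₄₅,X₅₁) = 1` in the completed `U𝔓₅`. -/
def FiveCycleMul (k : Type*) [Field k] (φ : NC k 2) : Prop :=
  S5 k φ 0 1 2 * S5 k φ 2 3 4 * S5 k φ 4 0 1 * S5 k φ 1 2 3 * S5 k φ 3 4 0 = 1

/-- `t_{ij}` as a degree-one element of the completed `U𝔞₄`. -/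
noncomputable def lt (k : Type*) [Field k] (i j : Fin 4) : PowerSeries (AA k 4) :=
  lin (tg k 4 i j)

/-- Drinfel'd's pentagon equation
`φ(t₁₂,t₂₃+t₂₄)φ(t₁₃+t₂₃,t₃₄) = φ(t₂₃,t₃₄)φ(t₁₂+t₁₃,t₂₄+t₃₄)φ(t₁₂,t₂₃)`
in the completed `U𝔞₄` (strings are `0,1,2,3`). -/
def Pentagon (k : Type*) [Field k] (φ : NC k 2) : Prop :=
  substPS φ (lt k 0 1) (lt k 1 2 + lt k 1 3) * substPS φ (lt k 0 2 + lt k 1 2) (lt k 2 3) =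
    substPS φ (lt k 1 2) (lt k 2 3) *
      substPS φ (lt k 0 1 + lt k 0 2) (lt k 1 3 + lt k 2 3) * substPS φ (lt k 0 1) (lt k 1 2)

/-- The 2-cycle relation `φ(X,Y)φ(Y,X) = 1` in `k⟨⟨X,Y⟩⟩`. -/
def TwoCycleMul (k : Type*) [Field k] (φ : NC k 2) : Prop :=
  substPS φ (XF k) (YF k) * substPS φ (YF k) (XF k) = 1

/-- The 3-cycle relation
`e^{μX/2}φ(Z,X)e^{μZ/2}φ(Y,Z)e^{μY/2}φ(X,Y) = 1`, `Z = -X-Y`, in `k⟨⟨X,Y⟩⟩`. -/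
def ThreeCycleMul (k : Type*) [Field k] (μ : k) (φ : NC k 2) : Prop :=
  expPS k ((μ / 2) • XF k) * substPS φ (ZF k) (XF k) * expPS k ((μ / 2) • ZF k) *
      substPS φ (YF k) (ZF k) * expPS k ((μ / 2) • YF k) * substPS φ (XF k) (YF k) = 1

/-- The special 3-cycle relation `φ(Z,X)φ(Y,Z)φ(X,Y) = 1`, `Z = -X-Y`. -/
def Special3 (k : Type*) [Field k] (φ : NC k 2) : Prop :=
  substPS φ (ZF k) (XF k) * substPS φ (YF k) (ZF k) * substPS φ (XF k) (YF k) = 1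

/-- Drinfel'd's first hexagon equation, for elements `a = t₁₂`, `b = t₁₃`, `c = t₂₃`:
`exp(μ(t₁₃+t₂₃)/2) = φ(t₁₃,t₁₂)exp(μt₁₃/2)φ(t₁₃,t₂₃)⁻¹exp(μt₂₃/2)φ(t₁₂,t₂₃)`. -/
def Hex1 (k : Type*) [Field k] {A : Type*} [Ring A] [Algebra k A]
    (μ : k) (φ : NC k 2) (a b c : A) : Prop :=
  expPS k ((μ / 2) • (lin b + lin c)) =
    substPS φ (lin b) (lin a) * expPS k ((μ / 2) • lin b) * PSInv (substPS φ (lin b) (lin c)) *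
      expPS k ((μ / 2) • lin c) * substPS φ (lin a) (lin c)

/-- Drinfel'd's second hexagon equation, for elements `a = t₁₂`, `b = t₁₃`, `c = t₂₃`:
`exp(μ(t₁₂+t₁₃)/2) = φ(t₂₃,t₁₃)⁻¹exp(μt₁₃/2)φ(t₁₂,t₁₃)exp(μt₁₂/2)φ(t₁₂,t₂₃)⁻¹`. -/
def Hex2 (k : Type*) [Field k] {A : Type*} [Ring A] [Algebra k A]
    (μ : k) (φ : NC k 2) (a b c : A) : Prop :=
  expPS k ((μ / 2) • (lin a + lin b)) =
    PSInv (substPS φ (lin c) (lin b)) * expPS k ((μ / 2) • lin b) * substPS φ (lin a) (lin b) *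
      expPS k ((μ / 2) • lin a) * PSInv (substPS φ (lin a) (lin c))

/-- `(ad Y)^m (X)` in the model of `k⟨⟨X,Y⟩⟩`. -/
noncomputable def adYiter (k : Type*) [CommRing k] (m : ℕ) :
    PowerSeries (FreeAlgebra k (Fin 2)) :=
  (fun z => YF k * z - z * YF k)^[m] (XF k)


/-!
Since `2 ^ #X(w) = 2` wherever `R w ≠ 0`, only the words `Y^p X Y^q` carry coefficients.
Primitivity, applied to the shuffles of the one-letter word `Y` with `Y^p X Y^q`, gives
`(p+1) R(Y^{p+1} X Y^q) + (q+1) R(Y^p X Y^{q+1}) = 0`, hence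
`R(Y^p X Y^q) = (-1)^q C(p+q, p) R(Y^{p+q} X)`. These are, up to the factor `R(Y^m X)`, the
coefficients of `(ad Y)^m X = ∑ₚ (-1)^{m-p} C(m, p) Y^p X Y^{m-p}`, read off from the binomial
expansion of `ad Y = L_Y - R_Y` with commuting `L_Y`, `R_Y`.
-/

theorem shuffle_singleton_replicate {α : Type*} (b : α) (q : ℕ) :
    shuffle [b] (List.replicate q b) = List.replicate (q + 1) (List.replicate (q + 1) b) := by
  induction q with
  | zero => simp [shuffle]
  | succ q ih =>
    rw [List.replicate_succ, shuffle, ih]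
    simp [shuffle, List.replicate_succ]

theorem shuffle_singleton_replicate_append_cons {α : Type*} (a b : α) (p q : ℕ) :
    shuffle [b] (List.replicate p b ++ a :: List.replicate q b) =
      List.replicate (p + 1) (List.replicate (p + 1) b ++ a :: List.replicate q b) ++
        List.replicate (q + 1) (List.replicate p b ++ a :: List.replicate (q + 1) b) := by
  induction p with
  | zero => simp [shuffle, shuffle_singleton_replicate, List.replicate_succ]
  | succ p ih =>
    rw [List.replicate_succ, List.cons_append, shuffle, ih]
    simp [shuffle, List.replicate_succ]

def singleXWord (p q : ℕ) : Word 2 :=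
  List.replicate p 1 ++ 0 :: List.replicate q 1

theorem getElem_singleXWord (p q i : ℕ) (hi : i < (singleXWord p q).length) :
    (singleXWord p q)[i] = if i = p then 0 else 1 := by
  simp only [singleXWord, List.getElem_append, List.length_replicate, List.getElem_replicate,
    List.getElem_cons]
  split_ifs <;> first | rfl | omega

theorem prod_map_singleXWord {M : Type*} [Monoid M] (a b : M) (p q : ℕ) :
    ((singleXWord p q).map ![a, b]).prod = b ^ p * a * b ^ q := by
  simp [singleXWord, mul_assoc]

theorem eq_replicate_one_of_count_zero_eq_zero {w : Word 2} (h : w.count 0 = 0) :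
    w = List.replicate w.length 1 :=
  List.eq_replicate_iff.2 ⟨rfl, fun b hb =>
    Fin.eq_one_of_ne_zero b fun hb0 => List.count_eq_zero.1 h (hb0 ▸ hb)⟩

theorem exists_eq_singleXWord_of_count_eq_one :
    ∀ w : Word 2, w.count 0 = 1 → ∃ p q, w = singleXWord p q
  | [], h => by simp at h
  | a :: w, h => by
    fin_cases a
    · refine ⟨0, w.length, ?_⟩
      rw [singleXWord, List.replicate_zero, List.nil_append,
        ← eq_replicate_one_of_count_zero_eq_zero (by simpa using h)]
      rfl
    · obtain ⟨p, q, rfl⟩ := exists_eq_singleXWord_of_count_eq_one w (by simpa using h)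
      exact ⟨p + 1, q, rfl⟩

def singleX {n : ℕ} (p : Fin n) : Fin n → Fin 2 := fun i => if i = p then 0 else 1

theorem singleX_injective {n : ℕ} : Function.Injective (singleX (n := n)) := by
  intro p p' h
  by_contra hne
  simpa [singleX, hne] using congrFun h p

theorem ofFn_singleX {m : ℕ} (p : Fin (m + 1)) :
    List.ofFn (singleX p) = singleXWord p (m - p) := by
  refine List.ext_getElem (by simp [singleXWord]; omega) fun i _ _ => ?_
  rw [List.getElem_ofFn, getElem_singleXWord]
  simp only [singleX, Fin.ext_iff]

theorem IsLieLike.coeff_singleXWord_succ_left [CommRing k] {R : NC k 2} (hR : IsLieLike R)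
    (p q : ℕ) :
    ((p : k) + 1) * R (singleXWord (p + 1) q) + ((q : k) + 1) * R (singleXWord p (q + 1)) = 0 := by
  have h := hR.2 [1] (singleXWord p q) (List.cons_ne_nil _ _) (by simp [singleXWord])
  rw [singleXWord, shuffle_singleton_replicate_append_cons] at h
  simpa [singleXWord] using h

theorem IsLieLike.coeff_singleXWord [Field k] [CharZero k] {R : NC k 2} (hR : IsLieLike R)
    (p q : ℕ) :
    R (singleXWord p q) = (-1) ^ q * ((p + q).choose p : k) * R (singleXWord (p + q) 0) := by
  induction q generalizing p with
  | zero => simp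
  | succ q ih =>
    have hq : (q : k) + 1 ≠ 0 := by exact_mod_cast q.succ_ne_zero
    have hchoose :
        ((p + q + 1).choose (p + 1) : k) * (p + 1) = (p + q + 1).choose p * (q + 1) := by
      have h := Nat.choose_succ_right_eq (p + q + 1) p
      rw [show p + q + 1 - p = q + 1 by omega] at h
      exact_mod_cast h
    have hrec := hR.coeff_singleXWord_succ_left p q
    rw [ih (p + 1), show p + 1 + q = p + q + 1 by omega] at hrec
    apply mul_left_cancel₀ hq
    rw [show p + (q + 1) = p + q + 1 by omega]
    linear_combination hrec - (-1) ^ q * R (singleXWord (p + q + 1) 0) * hchoose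

theorem count_eq_one_of_two_pow_mul_eq [Field k] [CharZero k] {R : NC k 2}
    (hdil : ∀ w : Word 2, (2 : k) ^ (w.count (0 : Fin 2)) * R w = 2 * R w)
    {w : Word 2} (hw : R w ≠ 0) : w.count 0 = 1 := by
  have h : ((2 ^ w.count 0 : ℕ) : k) = ((2 ^ 1 : ℕ) : k) := by
    exact_mod_cast mul_right_cancel₀ hw (hdil w)
  exact Nat.pow_right_injective le_rfl (Nat.cast_injective h)

theorem iterate_commutator_eq_sum {R A : Type*} [CommRing R] [Ring A] [Algebra R A] (a b : A)
    (m : ℕ) :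
    (fun z => a * z - z * a)^[m] b =
      ∑ p ∈ Finset.range (m + 1), ((-1) ^ (m - p) * m.choose p : R) • (a ^ p * b * a ^ (m - p)) := by
  have hcomm :
      (fun z => a * z - z * a) = ⇑(LinearMap.mulLeft R a + -LinearMap.mulRight R a) := by
    ext z; simp [sub_eq_add_neg]
  rw [hcomm, ← Module.End.coe_pow,
    (LinearMap.commute_mulLeft_right (R := R) a a).neg_right.add_pow, LinearMap.sum_apply]
  refine Finset.sum_congr rfl fun p _ => ?_
  rw [neg_pow, LinearMap.pow_mulLeft, LinearMap.pow_mulRight,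
    show (-1 : Module.End R A) = algebraMap R _ (-1) by simp, ← map_pow]
  simp only [Module.End.mul_apply, Module.algebraMap_end_apply, LinearMap.mulLeft_apply,
    LinearMap.mulRight_apply, Module.End.natCast_apply, mul_smul, mul_smul_comm, smul_mul_assoc,
    Nat.cast_smul_eq_nsmul, mul_assoc]

theorem sum_ofFn_eq_sum_singleXWord {A : Type*} [CommRing k] [Ring A] [Algebra k A] {R : NC k 2}
    (hsupp : ∀ w, R w ≠ 0 → w.count 0 = 1) (a b : A) (m : ℕ) :
    ∑ u : Fin (m + 1) → Fin 2, R (List.ofFn u) • ((List.ofFn u).map ![a, b]).prod =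
      ∑ p : Fin (m + 1), R (singleXWord p (m - p)) • (b ^ (p : ℕ) * a * b ^ (m - p)) := by
  refine (Fintype.sum_of_injective singleX singleX_injective _ _ (fun u hu => ?_)
    fun p => ?_).symm
  · by_contra hne
    obtain ⟨p, q, hpq⟩ :=
      exists_eq_singleXWord_of_count_eq_one _ (hsupp _ (left_ne_zero_of_smul hne))
    have hlen : m + 1 = p + (q + 1) := by simpa [singleXWord] using congrArg List.length hpq
    refine hu ⟨⟨p, by omega⟩, List.ofFn_injective ?_⟩
    rw [ofFn_singleX, hpq, show m - p = q by omega]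
  · rw [ofFn_singleX, prod_map_singleXWord]

theorem IsLieLike.sum_singleXWord_eq_smul_iterate [Field k] [CharZero k] {A : Type*} [Ring A]
    [Algebra k A] {R : NC k 2} (hR : IsLieLike R) (a b : A) (m : ℕ) :
    ∑ p : Fin (m + 1), R (singleXWord p (m - p)) • (b ^ (p : ℕ) * a * b ^ (m - p)) =
      R (singleXWord m 0) • (fun z => b * z - z * b)^[m] a := by
  rw [iterate_commutator_eq_sum (R := k), Finset.smul_sum,
    Fin.sum_univ_eq_sum_range (fun p => R (singleXWord p (m - p)) • (b ^ p * a * b ^ (m - p)))]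
  refine Finset.sum_congr rfl fun p hp => ?_
  rw [hR.coeff_singleXWord, Nat.add_sub_cancel' (Finset.mem_range_succ_iff.1 hp), smul_smul,
    mul_comm]

section PowerSeries

open PowerSeries

variable {A : Type*} [Ring A]

theorem lin_eq_monomial (a : A) : lin a = monomial 1 a := by
  ext n
  rw [lin, coeff_mk, coeff_monomial]

theorem prod_map_lin {ι : Type*} (f : ι → A) (l : List ι) :
    (l.map (fun i => lin (f i))).prod = monomial l.length (l.map f).prod := by
  induction l with
  | nil => simp
  | cons i l ih =>
    rw [List.map_cons, List.prod_cons, ih, lin_eq_monomial, monomial_mul_monomial,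
      List.length_cons, add_comm, List.map_cons, List.prod_cons]

theorem coeff_substPS_lin [CommRing k] [Algebra k A] (φ : NC k 2) (a b : A) (n : ℕ) :
    coeff n (substPS φ (lin a) (lin b)) =
      ∑ u : Fin n → Fin 2, φ (List.ofFn u) • ((List.ofFn u).map ![a, b]).prod := by
  have hlin : ![lin a, lin b] = fun i => lin (![a, b] i) := by
    ext i : 1; fin_cases i <;> rfl
  simp only [substPS, coeff_mk, hlin, prod_map_lin, List.length_ofFn, coeff_monomial]
  rw [Finset.sum_eq_single_of_mem n (Finset.self_mem_range_succ n)]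
  · simp only [if_true]
  · intro m _ hmn
    simp [Ne.symm hmn]

theorem iterate_commutator_lin (a b : A) (m : ℕ) :
    (fun z => lin b * z - z * lin b)^[m] (lin a) =
      monomial (m + 1) ((fun z => b * z - z * b)^[m] a) := by
  induction m with
  | zero => exact lin_eq_monomial a
  | succ m ih =>
    rw [Function.iterate_succ_apply', ih, Function.iterate_succ_apply', lin_eq_monomial,
      monomial_mul_monomial, monomial_mul_monomial, add_comm 1, ← map_sub]

end PowerSeries

/-- If a Lie series `R = R(X,Y)` in the completed free Lie algebra on `X`, `Y`
satisfies `R(2X,Y) = 2·R(X,Y)`, then `R = Σ_{m≥1} a_m (ad Y)^{m-1}(X)` for some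
scalars `a_m ∈ k`.  (The coefficient of a word `w` in `R(2X,Y)` is
`2^{#occurrences of X in w}` times that of `R`; the degree-`n` part of the
conclusion's right-hand side is `a_n • (ad Y)^{n-1}(X)`.) -/
theorem statement1 (k : Type*) [Field k] [CharZero k] (R : NC k 2)
    (hR : IsLieLike R)
    (hdil : ∀ w : Word 2, (2 : k) ^ (w.count (0 : Fin 2)) * R w = 2 * R w) :
    ∃ a : ℕ → k, ∀ n : ℕ,
      PowerSeries.coeff n (substPS R (XF k) (YF k)) =
        a n • PowerSeries.coeff n (adYiter k (n - 1)) := by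
  refine ⟨fun n => R (singleXWord (n - 1) 0), fun n => ?_⟩
  rw [adYiter, XF, YF, coeff_substPS_lin, iterate_commutator_lin, PowerSeries.coeff_monomial]
  cases n with
  | zero => simp [hR.1]
  | succ m =>
    rw [sum_ofFn_eq_sum_singleXWord (fun w => count_eq_one_of_two_pow_mul_eq hdil),
      hR.sum_singleXWord_eq_smul_iterate, Nat.add_sub_cancel, if_pos rfl]
    rfl
end

section
/- Let φ ∈ k⟨⟨X,Y⟩⟩ be group-like, μ ∈ k. The pair (μ,φ) satisfies the two hexagon equations exp(μ(t₁₃+t₂₃)/2) = φ(t₁₃,t₁₂)exp(μt₁₃/2)φ(t₁₃,t₂₃)⁻¹exp(μt₂₃/2)φ(t₁₂,t₂₃) and exp(μ(t₁₂+t₁₃)/2) = φ(t₂₃,t₁₃)⁻¹exp(μt₁₃/2)φ(t₁₂,t₁₃)exp(μt₁₂/2)φ(t₁₂,t₂₃)⁻¹ in U𝔞₃ if and only if φ satisfies the 2-cycle relation φ(X,Y)φ(Y,X)=1 and the 3-cycle relation e^{μX/2}φ(Z,X)e^{μZ/2}φ(Y,Z)e^{μY/2}φ(X,Y)=1 with X+Y+Z=0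 in k⟨⟨X,Y⟩⟩. -/
open scoped BigOperators

variable {k : Type*}

section Aux

lemma shuffle_nil_left {α : Type*} (v : List α) : shuffle [] v = [v] := by
  cases v <;> simp [shuffle]

lemma shuffle_nil_right {α : Type*} (u : List α) : shuffle u [] = [u] := by
  cases u <;> simp [shuffle]

lemma shuffle_cons_cons {α : Type*} (a b : α) (u v : List α) :
    shuffle (a :: u) (b :: v) =
      ((shuffle u (b :: v)).map (a :: ·)) ++ ((shuffle (a :: u) v).map (b :: ·)) := by
  rw [shuffle]

lemma shuffle_map {α β : Type*} (f : α → β) (u v : List α) :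
    (shuffle u v).map (List.map f) = shuffle (u.map f) (v.map f) := by
  induction u, v using shuffle.induct with
  | case1 v => simp [shuffle_nil_left]
  | case2 u h => cases u with
    | nil => simp [shuffle_nil_left]
    | cons a u => simp [shuffle_nil_right]
  | case3 a u b v ih1 ih2 =>
      conv_rhs => rw [List.map_cons, List.map_cons, shuffle_cons_cons]
      rw [shuffle_cons_cons, List.map_append, ← List.map_cons (f := f) (a := b) (l := v), ← List.map_cons (f := f) (a := a) (l := u),
        ← ih1, ← ih2]
      simp [List.map_map, Function.comp_def]

section Wsum
variable {M N : Type*} [AddCommMonoid M] [AddCommMonoid N] {σ : Type*} [Fintype σ]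

def Wsum : ℕ → (List σ → M) → M
  | 0, f => f []
  | n+1, f => ∑ a : σ, Wsum n (fun l => f (a :: l))

lemma Wsum_zero (f : List σ → M) : Wsum 0 f = f [] := rfl

lemma Wsum_succ (n : ℕ) (f : List σ → M) :
    Wsum (n+1) f = ∑ a : σ, Wsum n (fun l => f (a :: l)) := rfl

lemma Wsum_congr {n : ℕ} {f g : List σ → M} (h : ∀ l : List σ, f l = g l) :
    Wsum n f = Wsum n g := by
  induction n generalizing f g with
  | zero => exact h []
  | succ n ih => exact Finset.sum_congr rfl fun a _ => ih fun l => h (a :: l)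

lemma Wsum_add (n : ℕ) (f g : List σ → M) :
    Wsum n (fun l => f l + g l) = Wsum n f + Wsum n g := by
  induction n generalizing f g with
  | zero => rfl
  | succ n ih =>
      simp only [Wsum_succ]
      rw [← Finset.sum_add_distrib]
      exact Finset.sum_congr rfl fun a _ => ih _ _

lemma Wsum_hom (F : M →+ N) (n : ℕ) (f : List σ → M) :
    F (Wsum n f) = Wsum n (fun l => F (f l)) := by
  induction n generalizing f with
  | zero => rfl
  | succ n ih =>
      simp only [Wsum_succ, map_sum]
      exact Finset.sum_congr rfl fun a _ => ih _

lemma sum_pi_eq_Wsum (n : ℕ) (f : List σ → M) :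
    ∑ u : Fin n → σ, f (List.ofFn u) = Wsum n f := by
  induction n generalizing f with
  | zero => simp [Wsum_zero, List.ofFn_zero]
  | succ n ih =>
      calc ∑ u : Fin (n+1) → σ, f (List.ofFn u)
          = ∑ p : σ × (Fin n → σ), f (p.1 :: List.ofFn p.2) :=
            Fintype.sum_equiv (Fin.consEquiv (fun _ : Fin (n+1) => σ)).symm
              (fun u => f (List.ofFn u)) (fun p => f (p.1 :: List.ofFn p.2))
              (fun u => by
                simp only [Fin.consEquiv, Equiv.coe_fn_symm_mk]
                rw [List.ofFn_succ]
                rfl)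
        _ = ∑ a : σ, ∑ v : Fin n → σ, f (a :: List.ofFn v) :=
            Fintype.sum_prod_type (f := fun p : σ × (Fin n → σ) => f (p.1 :: List.ofFn p.2))
        _ = ∑ a : σ, Wsum n (fun l => f (a :: l)) :=
            Finset.sum_congr rfl (fun a _ => ih (fun l => f (a :: l)))
        _ = Wsum (n+1) f := (Wsum_succ n f).symm

def emb2 : Fin 2 → Fin 3 := Fin.castSucc

lemma splitW (m j : ℕ) (F : List (Fin 3) → M) :
    Wsum m (fun w : List (Fin 2) =>
        ((shuffle (List.replicate (j+1) (2:Fin 3)) (w.map emb2)).map F).sum) =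
      Wsum m (fun w : List (Fin 2) =>
        ((shuffle (List.replicate j (2:Fin 3)) (w.map emb2)).map (fun t => F (2 :: t))).sum) +
      (if m = 0 then 0 else ∑ b : Fin 2, Wsum (m-1) (fun w : List (Fin 2) =>
        ((shuffle (List.replicate (j+1) (2:Fin 3)) (w.map emb2)).map
          (fun t => F (emb2 b :: t))).sum)) := by
  cases m with
  | zero =>
      rw [if_pos rfl, add_zero]
      simp only [Wsum_zero, List.map_nil, shuffle_nil_right, List.replicate_succ]
      simp
  | succ m =>
      rw [if_neg (Nat.succ_ne_zero m)]
      simp only [Wsum_succ, Nat.add_sub_cancel]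
      rw [← Finset.sum_add_distrib]
      refine Finset.sum_congr rfl fun b _ => ?_
      rw [← Wsum_add]
      refine Wsum_congr fun w => ?_
      simp only [List.map_cons, List.replicate_succ, shuffle_cons_cons, List.map_append,
        List.sum_append, List.map_map]
      rw [← List.replicate_succ]
      congr 1 <;> simp [Function.comp_def]

lemma key (n : ℕ) (F : List (Fin 3) → M) :
    Wsum n F = ∑ j ∈ Finset.range (n+1), Wsum (n - j)
      (fun w : List (Fin 2) =>
        ((shuffle (List.replicate j (2:Fin 3)) (w.map emb2)).map F).sum) := by
  induction n generalizing F with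
  | zero => simp [Wsum_zero, shuffle_nil_left]
  | succ n ih =>
      rw [Finset.sum_range_succ']
      have hsplit : ∀ j ∈ Finset.range (n+1),
          Wsum (n + 1 - (j+1)) (fun w : List (Fin 2) =>
            ((shuffle (List.replicate (j+1) (2:Fin 3)) (w.map emb2)).map F).sum) =
          Wsum (n - j) (fun w : List (Fin 2) =>
            ((shuffle (List.replicate j (2:Fin 3)) (w.map emb2)).map (fun t => F (2 :: t))).sum) +
          (if n - j = 0 then 0 else ∑ b : Fin 2, Wsum (n - j - 1) (fun w : List (Fin 2) =>
            ((shuffle (List.replicate (j+1) (2:Fin 3)) (w.map emb2)).map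
              (fun t => F (emb2 b :: t))).sum)) := by
        intro j _
        rw [Nat.succ_sub_succ]
        exact splitW (n - j) j F
      rw [Finset.sum_congr rfl hsplit, Finset.sum_add_distrib]
      have h2 : ∑ j ∈ Finset.range (n+1), Wsum (n - j) (fun w : List (Fin 2) =>
            ((shuffle (List.replicate j (2:Fin 3)) (w.map emb2)).map (fun t => F (2 :: t))).sum)
          = Wsum n (fun t => F (2 :: t)) := (ih _).symm
      rw [h2]
      -- handle the B-part plus the j = 0 term
      have hB : (∑ j ∈ Finset.range (n+1),
          (if n - j = 0 then 0 else ∑ b : Fin 2, Wsum (n - j - 1) (fun w : List (Fin 2) =>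
            ((shuffle (List.replicate (j+1) (2:Fin 3)) (w.map emb2)).map
              (fun t => F (emb2 b :: t))).sum)))
          + Wsum (n + 1 - 0) (fun w : List (Fin 2) =>
            ((shuffle (List.replicate 0 (2:Fin 3)) (w.map emb2)).map F).sum)
          = ∑ b : Fin 2, Wsum n (fun t => F (emb2 b :: t)) := by
        rw [Finset.sum_range_succ, Nat.sub_self, if_pos rfl, add_zero]
        have hlast : Wsum (n + 1 - 0) (fun w : List (Fin 2) =>
            ((shuffle (List.replicate 0 (2:Fin 3)) (w.map emb2)).map F).sum)
            = ∑ b : Fin 2, Wsum n (fun w : List (Fin 2) =>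
                ((shuffle (List.replicate 0 (2:Fin 3)) (w.map emb2)).map
                  (fun t => F (emb2 b :: t))).sum) := by
          rw [Nat.sub_zero, Wsum_succ]
          refine Finset.sum_congr rfl fun b _ => Wsum_congr fun w => ?_
          simp [shuffle_nil_left]
        rw [hlast]
        have hj : ∀ j ∈ Finset.range n,
            (if n - j = 0 then 0 else ∑ b : Fin 2, Wsum (n - j - 1) (fun w : List (Fin 2) =>
              ((shuffle (List.replicate (j+1) (2:Fin 3)) (w.map emb2)).map
                (fun t => F (emb2 b :: t))).sum))
            = ∑ b : Fin 2, Wsum (n - (j+1)) (fun w : List (Fin 2) =>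
              ((shuffle (List.replicate (j+1) (2:Fin 3)) (w.map emb2)).map
                (fun t => F (emb2 b :: t))).sum) := by
          intro j hj
          rw [Finset.mem_range] at hj
          rw [if_neg (by omega), Nat.sub_sub]
        rw [Finset.sum_congr rfl hj, Finset.sum_comm, ← Finset.sum_add_distrib]
        refine Finset.sum_congr rfl fun b _ => ?_
        rw [ih (fun t => F (emb2 b :: t)),
          Finset.sum_range_succ' (fun j => Wsum (n - j) (fun w : List (Fin 2) =>
            ((shuffle (List.replicate j (2:Fin 3)) (w.map emb2)).map
              (fun t => F (emb2 b :: t))).sum)) n, Nat.sub_zero]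
      rw [add_assoc, hB, Wsum_succ]
      rw [show ∑ a : Fin 3, Wsum n (fun l => F (a :: l)) =
        Wsum n (fun l => F (0 :: l)) + Wsum n (fun l => F (1 :: l)) +
          Wsum n (fun l => F (2 :: l)) from Fin.sum_univ_three _]
      rw [show ∑ b : Fin 2, Wsum n (fun t => F (emb2 b :: t)) =
        Wsum n (fun l => F (emb2 0 :: l)) + Wsum n (fun l => F (emb2 1 :: l)) from
          Fin.sum_univ_two _]
      have e0 : emb2 0 = 0 := rfl
      have e1 : emb2 1 = 1 := rfl
      rw [e0, e1]
      abel

end Wsum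



section Core
variable {k : Type*} [Field k] [CharZero k] {A : Type*} [Ring A] [Algebra k A]

lemma Wsum_smul {σ : Type*} [Fintype σ] (n : ℕ) (α : k) (f : List σ → A) :
    Wsum n (fun l => α • f l) = α • Wsum n f := by
  induction n generalizing f with
  | zero => rfl
  | succ n ih =>
      simp only [Wsum_succ]
      rw [Finset.smul_sum]
      exact Finset.sum_congr rfl fun a _ => ih _

lemma Wsum_mul_left {σ : Type*} [Fintype σ] (n : ℕ) (x : A) (f : List σ → A) :
    Wsum n (fun l => x * f l) = x * Wsum n f := by
  induction n generalizing f with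
  | zero => rfl
  | succ n ih =>
      simp only [Wsum_succ]
      rw [Finset.mul_sum]
      exact Finset.sum_congr rfl fun a _ => ih _

lemma list_sum_map_smul {β : Type*} (l : List β) (h : β → k) (C : A) :
    (l.map (fun v => h v • C)).sum = (l.map h).sum • C := by
  induction l with
  | nil => simp
  | cons a l ih => simp [ih, add_smul]

lemma prod_shuffle_central (g : Fin 3 → A) (s : A) (hs : ∀ x : A, Commute s x)
    (hg : g 2 = s) :
    ∀ (j : ℕ) (l : List (Fin 3)) (v : List (Fin 3)),
      v ∈ shuffle (List.replicate j (2:Fin 3)) l →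
      (v.map g).prod = s ^ j * (l.map g).prod := by
  have main : ∀ (N j : ℕ) (l : List (Fin 3)), j + l.length ≤ N →
      ∀ v ∈ shuffle (List.replicate j (2:Fin 3)) l,
        (v.map g).prod = s ^ j * (l.map g).prod := by
    intro N
    induction N with
    | zero =>
        intro j l h v hv
        have hj : j = 0 := by omega
        subst hj
        rw [List.replicate_zero, shuffle_nil_left] at hv
        simp only [List.mem_singleton] at hv
        subst hv
        simp
    | succ N ihN =>
        intro j l h v hv
        cases j with
        | zero =>
            rw [List.replicate_zero, shuffle_nil_left] at hv
            simp only [List.mem_singleton] at hv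
            subst hv
            simp
        | succ j =>
            cases l with
            | nil =>
                rw [shuffle_nil_right] at hv
                simp only [List.mem_singleton] at hv
                subst hv
                simp [List.map_replicate, hg, List.prod_replicate]
            | cons b l =>
                rw [List.replicate_succ, shuffle_cons_cons] at hv
                rw [List.mem_append] at hv
                rcases hv with hv | hv
                · rw [List.mem_map] at hv
                  obtain ⟨v1, hv1, rfl⟩ := hv
                  have e1 := ihN j (b :: l) (by simp only [List.length_cons] at h ⊢; omega) v1 hv1
                  rw [List.map_cons, List.prod_cons, e1, hg, ← mul_assoc, ← pow_succ']
                · rw [List.mem_map] at hv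
                  obtain ⟨v2, hv2, rfl⟩ := hv
                  have e2 := ihN (j+1) l (by simp only [List.length_cons] at h ⊢; omega) v2 hv2
                  rw [List.map_cons, List.prod_cons, e2, List.map_cons, List.prod_cons,
                    ← mul_assoc, ← ((hs (g b)).pow_left (j+1)).eq, mul_assoc]
  intro j l v hv
  exact main (j + l.length) j l le_rfl v hv

lemma shuffle_single_replicate {α : Type*} (a : α) :
    ∀ j : ℕ, shuffle [a] (List.replicate j a) =
      List.replicate (j+1) (List.replicate (j+1) a) := by
  intro j
  induction j with
  | zero => simp [shuffle_nil_right]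
  | succ j ih =>
      rw [List.replicate_succ, shuffle_cons_cons, shuffle_nil_left, ih]
      simp [List.map_replicate, List.replicate_succ]

lemma phi_replicate {φ : NC k 2} (hφ : IsGroupLike φ) (i : Fin 2) :
    ∀ j : ℕ, φ (List.replicate j i) = (j.factorial : k)⁻¹ * (φ [i])^j := by
  intro j
  induction j with
  | zero => simpa using hφ.1
  | succ j ih =>
      have h := hφ.2 [i] (List.replicate j i)
      rw [shuffle_single_replicate, List.map_replicate, List.sum_replicate,
        nsmul_eq_mul] at h
      have hne : ((j+1 : ℕ) : k) ≠ 0 := Nat.cast_ne_zero.mpr (Nat.succ_ne_zero j)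
      have hfac : (j.factorial : k) ≠ 0 := Nat.cast_ne_zero.mpr (Nat.factorial_ne_zero j)
      have h2 : φ (List.replicate (j+1) i) =
          (((j+1:ℕ):k))⁻¹ * (φ [i] * φ (List.replicate j i)) := by
        rw [h, ← mul_assoc, inv_mul_cancel₀ hne, one_mul]
      rw [h2, ih, Nat.factorial_succ]
      push_cast
      rw [pow_succ]
      field_simp

lemma expandL (s p q : A) (n : ℕ) (ψ : List (Fin 2) → k) (x : A) :
    Wsum n (fun w : List (Fin 2) => ψ w • (x * (w.map ![s + p, q]).prod)) =
    Wsum n (fun t : List (Fin 3) => ψ (t.map (![0, 1, 0] : Fin 3 → Fin 2)) •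
      (x * (t.map ![p, q, s]).prod)) := by
  induction n generalizing ψ x with
  | zero => simp [Wsum_zero]
  | succ n ih =>
      rw [Wsum_succ, Wsum_succ, Fin.sum_univ_two, Fin.sum_univ_three]
      have h0 : Wsum n (fun l : List (Fin 2) => ψ ((0:Fin 2) :: l) •
          (x * ((((0:Fin 2) :: l)).map ![s + p, q]).prod)) =
          Wsum n (fun t : List (Fin 3) => ψ (0 :: t.map ![0,1,0]) • ((x * p) * (t.map ![p,q,s]).prod))
          + Wsum n (fun t : List (Fin 3) => ψ (0 :: t.map ![0,1,0]) • ((x * s) * (t.map ![p,q,s]).prod)) := by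
        rw [← ih (fun l => ψ (0 :: l)) (x * p), ← ih (fun l => ψ (0 :: l)) (x * s), ← Wsum_add]
        refine Wsum_congr fun l => ?_
        simp only [List.map_cons, List.prod_cons, Matrix.cons_val_zero]
        rw [← smul_add]
        congr 1
        noncomm_ring
      have h1 : Wsum n (fun l : List (Fin 2) => ψ ((1:Fin 2) :: l) •
          (x * ((((1:Fin 2) :: l)).map ![s + p, q]).prod)) =
          Wsum n (fun t : List (Fin 3) => ψ (1 :: t.map ![0,1,0]) • ((x * q) * (t.map ![p,q,s]).prod)) := by
        rw [← ih (fun l => ψ (1 :: l)) (x * q)]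
        refine Wsum_congr fun l => ?_
        simp only [List.map_cons, List.prod_cons, Matrix.cons_val_zero, Matrix.cons_val_one,
          Matrix.head_cons, Matrix.cons_val_two, Matrix.vecTail, Matrix.vecHead,
          Function.comp_def, Fin.succ]
        rw [← mul_assoc]
      rw [h0, h1]
      have g0 : Wsum n (fun l : List (Fin 3) => ψ (((0:Fin 3) :: l).map ![0,1,0]) •
          (x * (((0:Fin 3) :: l).map ![p,q,s]).prod)) =
          Wsum n (fun t : List (Fin 3) => ψ (0 :: t.map ![0,1,0]) • ((x * p) * (t.map ![p,q,s]).prod)) := by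
        refine Wsum_congr fun l => ?_
        simp only [List.map_cons, List.prod_cons, Matrix.cons_val_zero, Matrix.cons_val_one,
          Matrix.head_cons, Matrix.cons_val_two, Matrix.vecTail, Matrix.vecHead,
          Function.comp_def, Fin.succ]
        rw [← mul_assoc]
      have g1 : Wsum n (fun l : List (Fin 3) => ψ (((1:Fin 3) :: l).map ![0,1,0]) •
          (x * (((1:Fin 3) :: l).map ![p,q,s]).prod)) =
          Wsum n (fun t : List (Fin 3) => ψ (1 :: t.map ![0,1,0]) • ((x * q) * (t.map ![p,q,s]).prod)) := by
        refine Wsum_congr fun l => ?_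
        simp only [List.map_cons, List.prod_cons, Matrix.cons_val_zero, Matrix.cons_val_one,
          Matrix.head_cons, Matrix.cons_val_two, Matrix.vecTail, Matrix.vecHead,
          Function.comp_def, Fin.succ]
        rw [← mul_assoc]
      have g2 : Wsum n (fun l : List (Fin 3) => ψ (((2:Fin 3) :: l).map ![0,1,0]) •
          (x * (((2:Fin 3) :: l).map ![p,q,s]).prod)) =
          Wsum n (fun t : List (Fin 3) => ψ (0 :: t.map ![0,1,0]) • ((x * s) * (t.map ![p,q,s]).prod)) := by
        refine Wsum_congr fun l => ?_
        have hv1 : (![0, 1, 0] : Fin 3 → Fin 2) 2 = 0 := rfl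
        have hv2 : (![p, q, s] : Fin 3 → A) 2 = s := rfl
        simp only [List.map_cons, List.prod_cons, hv1, hv2]
        rw [← mul_assoc]
      rw [g0, g1, g2]
      abel

lemma expandR (s p q : A) (n : ℕ) (ψ : List (Fin 2) → k) (x : A) :
    Wsum n (fun w : List (Fin 2) => ψ w • (x * (w.map ![p, s + q]).prod)) =
    Wsum n (fun t : List (Fin 3) => ψ (t.map (![0, 1, 1] : Fin 3 → Fin 2)) •
      (x * (t.map ![p, q, s]).prod)) := by
  induction n generalizing ψ x with
  | zero => simp [Wsum_zero]
  | succ n ih =>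
      rw [Wsum_succ, Wsum_succ, Fin.sum_univ_two, Fin.sum_univ_three]
      have h1 : Wsum n (fun l : List (Fin 2) => ψ ((1:Fin 2) :: l) •
          (x * ((((1:Fin 2) :: l)).map ![p, s + q]).prod)) =
          Wsum n (fun t : List (Fin 3) => ψ (1 :: t.map ![0,1,1]) • ((x * q) * (t.map ![p,q,s]).prod))
          + Wsum n (fun t : List (Fin 3) => ψ (1 :: t.map ![0,1,1]) • ((x * s) * (t.map ![p,q,s]).prod)) := by
        rw [← ih (fun l => ψ (1 :: l)) (x * q), ← ih (fun l => ψ (1 :: l)) (x * s), ← Wsum_add]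
        refine Wsum_congr fun l => ?_
        have hv : (![p, s + q] : Fin 2 → A) 1 = s + q := rfl
        simp only [List.map_cons, List.prod_cons, hv]
        rw [← smul_add]
        congr 1
        noncomm_ring
      have h0 : Wsum n (fun l : List (Fin 2) => ψ ((0:Fin 2) :: l) •
          (x * ((((0:Fin 2) :: l)).map ![p, s + q]).prod)) =
          Wsum n (fun t : List (Fin 3) => ψ (0 :: t.map ![0,1,1]) • ((x * p) * (t.map ![p,q,s]).prod)) := by
        rw [← ih (fun l => ψ (0 :: l)) (x * p)]
        refine Wsum_congr fun l => ?_
        simp only [List.map_cons, List.prod_cons, Matrix.cons_val_zero]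
        rw [← mul_assoc]
      rw [h0, h1]
      have g0 : Wsum n (fun l : List (Fin 3) => ψ (((0:Fin 3) :: l).map ![0,1,1]) •
          (x * (((0:Fin 3) :: l).map ![p,q,s]).prod)) =
          Wsum n (fun t : List (Fin 3) => ψ (0 :: t.map ![0,1,1]) • ((x * p) * (t.map ![p,q,s]).prod)) := by
        refine Wsum_congr fun l => ?_
        simp only [List.map_cons, List.prod_cons, Matrix.cons_val_zero]
        rw [← mul_assoc]
      have g1 : Wsum n (fun l : List (Fin 3) => ψ (((1:Fin 3) :: l).map ![0,1,1]) •
          (x * (((1:Fin 3) :: l).map ![p,q,s]).prod)) =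
          Wsum n (fun t : List (Fin 3) => ψ (1 :: t.map ![0,1,1]) • ((x * q) * (t.map ![p,q,s]).prod)) := by
        refine Wsum_congr fun l => ?_
        have hv1 : (![0, 1, 1] : Fin 3 → Fin 2) 1 = 1 := rfl
        have hv2 : (![p, q, s] : Fin 3 → A) 1 = q := rfl
        simp only [List.map_cons, List.prod_cons, hv1, hv2]
        rw [← mul_assoc]
      have g2 : Wsum n (fun l : List (Fin 3) => ψ (((2:Fin 3) :: l).map ![0,1,1]) •
          (x * (((2:Fin 3) :: l).map ![p,q,s]).prod)) =
          Wsum n (fun t : List (Fin 3) => ψ (1 :: t.map ![0,1,1]) • ((x * s) * (t.map ![p,q,s]).prod)) := by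
        refine Wsum_congr fun l => ?_
        have hv1 : (![0, 1, 1] : Fin 3 → Fin 2) 2 = 1 := rfl
        have hv2 : (![p, q, s] : Fin 3 → A) 2 = s := rfl
        simp only [List.map_cons, List.prod_cons, hv1, hv2]
        rw [← mul_assoc]
      rw [g0, g1, g2]
      abel

lemma coreAux {φ : NC k 2} (hφ : IsGroupLike φ) (s p q : A) (hs : ∀ x : A, Commute s x)
    (c3 : Fin 3 → Fin 2) (i0 : Fin 2) (hc2 : c3 2 = i0) (hce : c3 ∘ emb2 = id)
    (j : ℕ) (w : List (Fin 2)) :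
    ((shuffle (List.replicate j (2:Fin 3)) (w.map emb2)).map
        (fun t => φ (t.map c3) • ((t.map ![p,q,s]).prod))).sum =
      (φ (List.replicate j i0) * φ w) • (s ^ j * ((w.map ![p,q]).prod)) := by
  have hprod : ∀ v ∈ shuffle (List.replicate j (2:Fin 3)) (w.map emb2),
      ((v.map ![p,q,s]).prod) = s ^ j * ((w.map ![p,q]).prod) := by
    intro v hv
    have h := prod_shuffle_central ![p,q,s] s hs rfl j (w.map emb2) v hv
    rw [h, List.map_map, show ((![p,q,s] : Fin 3 → A) ∘ emb2) = ![p,q] from by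
      funext b; fin_cases b <;> rfl]
  have e2 : (shuffle (List.replicate j (2:Fin 3)) (w.map emb2)).map
      (fun t => φ (t.map c3) • ((t.map ![p,q,s]).prod)) =
      (shuffle (List.replicate j (2:Fin 3)) (w.map emb2)).map
      (fun t => φ (t.map c3) • (s ^ j * ((w.map ![p,q]).prod))) :=
    List.map_congr_left (fun v hv => by rw [hprod v hv])
  rw [e2, list_sum_map_smul]
  congr 1
  have e3 : (shuffle (List.replicate j (2:Fin 3)) (w.map emb2)).map
      (fun v : List (Fin 3) => φ (v.map c3)) = (shuffle (List.replicate j i0) w).map φ := by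
    rw [show (fun v : List (Fin 3) => φ (v.map c3)) = (φ ∘ (List.map c3)) from rfl,
      ← List.map_map, shuffle_map, List.map_replicate, hc2, List.map_map, hce, List.map_id]
  rw [e3, ← hφ.2]

lemma coreL {φ : NC k 2} (hφ : IsGroupLike φ) (s p q : A) (hs : ∀ x : A, Commute s x)
    (n : ℕ) :
    Wsum n (fun w : List (Fin 2) => φ w • ((w.map ![s + p, q]).prod)) =
    ∑ j ∈ Finset.range (n+1), ((j.factorial : k)⁻¹ * (φ [0])^j) •
      (s ^ j * Wsum (n - j) (fun w : List (Fin 2) => φ w • ((w.map ![p, q]).prod))) := by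
  have e1 : Wsum n (fun w : List (Fin 2) => φ w • ((w.map ![s + p, q]).prod)) =
      Wsum n (fun t : List (Fin 3) => φ (t.map ![0,1,0]) • ((t.map ![p,q,s]).prod)) := by
    calc Wsum n (fun w : List (Fin 2) => φ w • ((w.map ![s + p, q]).prod))
        = Wsum n (fun w : List (Fin 2) => φ w • (1 * (w.map ![s + p, q]).prod)) :=
          Wsum_congr (fun l => by rw [one_mul])
      _ = Wsum n (fun t : List (Fin 3) => φ (t.map ![0,1,0]) • (1 * (t.map ![p,q,s]).prod)) :=
          expandL s p q n φ 1
      _ = Wsum n (fun t : List (Fin 3) => φ (t.map ![0,1,0]) • ((t.map ![p,q,s]).prod)) :=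
          Wsum_congr (fun l => by rw [one_mul])
  rw [e1, key n (fun t => φ (t.map ![0,1,0]) • ((t.map ![p,q,s]).prod))]
  refine Finset.sum_congr rfl fun j hj => ?_
  rw [Wsum_congr (fun w => coreAux hφ s p q hs ![0,1,0] 0 rfl
    (by funext b; fin_cases b <;> rfl) j w)]
  have step2 : ∀ w : List (Fin 2), (φ (List.replicate j (0:Fin 2)) * φ w) •
      (s ^ j * ((w.map ![p,q]).prod)) =
      φ (List.replicate j (0:Fin 2)) • (s ^ j * (φ w • ((w.map ![p,q]).prod))) := by
    intro w; rw [mul_smul, mul_smul_comm]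
  rw [Wsum_congr step2, Wsum_smul, Wsum_mul_left, phi_replicate hφ 0 j]

lemma coreR {φ : NC k 2} (hφ : IsGroupLike φ) (s p q : A) (hs : ∀ x : A, Commute s x)
    (n : ℕ) :
    Wsum n (fun w : List (Fin 2) => φ w • ((w.map ![p, s + q]).prod)) =
    ∑ j ∈ Finset.range (n+1), ((j.factorial : k)⁻¹ * (φ [1])^j) •
      (s ^ j * Wsum (n - j) (fun w : List (Fin 2) => φ w • ((w.map ![p, q]).prod))) := by
  have e1 : Wsum n (fun w : List (Fin 2) => φ w • ((w.map ![p, s + q]).prod)) =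
      Wsum n (fun t : List (Fin 3) => φ (t.map ![0,1,1]) • ((t.map ![p,q,s]).prod)) := by
    calc Wsum n (fun w : List (Fin 2) => φ w • ((w.map ![p, s + q]).prod))
        = Wsum n (fun w : List (Fin 2) => φ w • (1 * (w.map ![p, s + q]).prod)) :=
          Wsum_congr (fun l => by rw [one_mul])
      _ = Wsum n (fun t : List (Fin 3) => φ (t.map ![0,1,1]) • (1 * (t.map ![p,q,s]).prod)) :=
          expandR s p q n φ 1
      _ = Wsum n (fun t : List (Fin 3) => φ (t.map ![0,1,1]) • ((t.map ![p,q,s]).prod)) :=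
          Wsum_congr (fun l => by rw [one_mul])
  rw [e1, key n (fun t => φ (t.map ![0,1,1]) • ((t.map ![p,q,s]).prod))]
  refine Finset.sum_congr rfl fun j hj => ?_
  rw [Wsum_congr (fun w => coreAux hφ s p q hs ![0,1,1] 1 rfl
    (by funext b; fin_cases b <;> rfl) j w)]
  have step2 : ∀ w : List (Fin 2), (φ (List.replicate j (1:Fin 2)) * φ w) •
      (s ^ j * ((w.map ![p,q]).prod)) =
      φ (List.replicate j (1:Fin 2)) • (s ^ j * (φ w • ((w.map ![p,q]).prod))) := by
    intro w; rw [mul_smul, mul_smul_comm]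
  rw [Wsum_congr step2, Wsum_smul, Wsum_mul_left, phi_replicate hφ 1 j]

end Core



section PS
variable {k : Type*} [Field k] [CharZero k] {A : Type*} [Ring A] [Algebra k A]
  {B : Type*} [Ring B] [Algebra k B]

lemma coeff_lin (n : ℕ) (a : A) : PowerSeries.coeff n (lin a) = if n = 1 then a else 0 :=
  PowerSeries.coeff_mk _ _

lemma lin_add (a b : A) : lin (a + b) = lin a + lin b := by
  ext n
  rw [map_add, coeff_lin, coeff_lin, coeff_lin]
  split <;> simp

lemma lin_neg (a : A) : lin (-a) = - lin a := by
  ext n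
  rw [map_neg, coeff_lin, coeff_lin]
  split <;> simp

lemma lin_smul (c : k) (a : A) : c • lin a = lin (c • a) := by
  ext n
  rw [PowerSeries.coeff_smul, coeff_lin, coeff_lin]
  split <;> simp

lemma coeff_list_prod_lin (l : List A) (n : ℕ) :
    PowerSeries.coeff n ((l.map lin).prod) = if l.length = n then l.prod else 0 := by
  induction l generalizing n with
  | nil =>
      simp only [List.map_nil, List.prod_nil, List.length_nil]
      rw [PowerSeries.coeff_one]
      by_cases h : n = 0 <;> simp [h, eq_comm]
  | cons a l ih =>
      simp only [List.map_cons, List.prod_cons, List.length_cons]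
      rw [PowerSeries.coeff_mul]
      cases n with
      | zero =>
          rw [Finset.Nat.antidiagonal_zero]
          simp [coeff_lin]
      | succ n =>
          rw [Finset.sum_eq_single (1, n)]
          · rw [coeff_lin, if_pos rfl, ih]
            by_cases h : l.length = n
            · simp [h]
            · rw [if_neg h, if_neg (by omega), mul_zero]
          · rintro ⟨i, j⟩ hmem hne
            rw [Finset.HasAntidiagonal.mem_antidiagonal] at hmem
            rw [coeff_lin]
            rcases eq_or_ne i 1 with rfl | hi
            · exact absurd (by simp; omega : (1, j) = ((1 : ℕ), n)) hne
            · rw [if_neg hi, zero_mul]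
          · intro hmem
            exact absurd (by rw [Finset.HasAntidiagonal.mem_antidiagonal]; omega) hmem
  
lemma substPS_lin (φ : NC k 2) (p q : A) (n : ℕ) :
    PowerSeries.coeff n (substPS φ (lin p) (lin q)) =
      Wsum n (fun w : List (Fin 2) => φ w • ((w.map ![p, q]).prod)) := by
  rw [substPS, PowerSeries.coeff_mk]
  have hterm : ∀ m ∈ Finset.range (n+1), (∑ u : Fin m → Fin 2,
      φ (List.ofFn u) • PowerSeries.coeff n (((List.ofFn u).map ![lin p, lin q]).prod)) =
      if m = n then Wsum n (fun w : List (Fin 2) => φ w • ((w.map ![p,q]).prod)) else 0 := by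
    intro m hm
    have hmap : ∀ u : Fin m → Fin 2, (List.ofFn u).map ![lin p, lin q] =
        ((List.ofFn u).map ![p,q]).map lin := by
      intro u
      rw [List.map_map]
      congr 1
      funext i
      fin_cases i <;> rfl
    by_cases h : m = n
    · subst h
      rw [if_pos rfl, ← sum_pi_eq_Wsum]
      refine Finset.sum_congr rfl fun u _ => ?_
      rw [hmap u, coeff_list_prod_lin]
      rw [List.length_map, List.length_ofFn, if_pos rfl]
    · rw [if_neg h]
      refine Finset.sum_eq_zero fun u _ => ?_
      rw [hmap u, coeff_list_prod_lin, List.length_map, List.length_ofFn, if_neg h, smul_zero]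
  rw [Finset.sum_congr rfl hterm, Finset.sum_ite_eq' (Finset.range (n+1)) n,
    if_pos (Finset.self_mem_range_succ n)]

noncomputable def myExp (k : Type*) [Field k] {A : Type*} [Ring A] [Algebra k A] (b : A) :
    PowerSeries A := PowerSeries.mk fun n => (n.factorial : k)⁻¹ • b ^ n

lemma coeff_myExp (b : A) (n : ℕ) :
    PowerSeries.coeff n (myExp k b) = (n.factorial : k)⁻¹ • b ^ n :=
  PowerSeries.coeff_mk _ _

lemma lin_pow_coeff (b : A) (m n : ℕ) :
    PowerSeries.coeff n ((lin b) ^ m) = if m = n then b ^ m else 0 := by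
  have h : (lin b) ^ m = ((List.replicate m b).map lin).prod := by
    rw [List.map_replicate, List.prod_replicate]
  rw [h, coeff_list_prod_lin, List.length_replicate, List.prod_replicate]

lemma expPS_lin (b : A) : expPS k (lin b) = myExp k b := by
  ext n
  rw [expPS, PowerSeries.coeff_mk, coeff_myExp]
  have h : ∀ m ∈ Finset.range (n+1), (m.factorial : k)⁻¹ • PowerSeries.coeff n ((lin b)^m)
      = if m = n then (n.factorial : k)⁻¹ • b ^ n else 0 := by
    intro m hm
    rw [lin_pow_coeff]
    by_cases h : m = n
    · subst h; simp
    · simp [h]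
  rw [Finset.sum_congr rfl h, Finset.sum_ite_eq' _ n, if_pos (Finset.self_mem_range_succ n)]

lemma myExp_mul {b c : A} (h : Commute b c) : myExp k b * myExp k c = myExp k (b + c) := by
  ext n
  rw [PowerSeries.coeff_mul, coeff_myExp, Commute.add_pow h,
    Finset.Nat.sum_antidiagonal_eq_sum_range_succ_mk, Finset.smul_sum]
  refine Finset.sum_congr rfl fun m hm => ?_
  rw [Finset.mem_range] at hm
  have hm' : m ≤ n := by omega
  rw [coeff_myExp, coeff_myExp]
  have e1 : ((m.factorial : k)⁻¹ • b ^ m) * (((n-m).factorial : k)⁻¹ • c ^ (n-m)) =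
      ((m.factorial : k)⁻¹ * ((n-m).factorial : k)⁻¹) • (b ^ m * c ^ (n-m)) := by
    rw [mul_smul_comm, smul_mul_assoc, smul_smul, mul_comm (((n-m).factorial : k)⁻¹)]
  rw [e1]
  have e2 : b ^ m * c ^ (n-m) * ((n.choose m : ℕ) : A) =
      (n.choose m) • (b ^ m * c ^ (n-m)) := by
    rw [nsmul_eq_mul, (Nat.cast_commute ((n.choose m : ℕ)) (b ^ m * c ^ (n-m))).eq]
  rw [e2, ← Nat.cast_smul_eq_nsmul k, smul_smul]
  congr 1
  have hfac := Nat.choose_mul_factorial_mul_factorial hm'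
  have h1 : (m.factorial : k) ≠ 0 := Nat.cast_ne_zero.mpr (Nat.factorial_ne_zero m)
  have h2 : ((n-m).factorial : k) ≠ 0 := Nat.cast_ne_zero.mpr (Nat.factorial_ne_zero (n-m))
  have h3 : (n.factorial : k) ≠ 0 := Nat.cast_ne_zero.mpr (Nat.factorial_ne_zero n)
  have hfk : ((n.choose m : ℕ) : k) * (m.factorial : k) * ((n-m).factorial : k)
      = (n.factorial : k) := by exact_mod_cast congrArg (Nat.cast : ℕ → k) hfac
  field_simp
  linear_combination -hfk

lemma myExp_zero : myExp k (0 : A) = 1 := by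
  ext n
  rw [coeff_myExp, PowerSeries.coeff_one]
  cases n with
  | zero => simp
  | succ n => simp [zero_pow]

lemma constantCoeff_myExp (b : A) : PowerSeries.constantCoeff (myExp k b) = 1 := by
  rw [← PowerSeries.coeff_zero_eq_constantCoeff, coeff_myExp]
  simp

lemma constantCoeff_substPS_lin (φ : NC k 2) (h1 : φ [] = 1) (p q : A) :
    PowerSeries.constantCoeff (substPS φ (lin p) (lin q)) = 1 := by
  rw [← PowerSeries.coeff_zero_eq_constantCoeff, substPS_lin]
  rw [Wsum_zero]
  simp [h1]

end PS


section PS2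
variable {k : Type*} [Field k] [CharZero k] {A : Type*} [Ring A] [Algebra k A]
  {B : Type*} [Ring B] [Algebra k B]

lemma coeff_PSInv (s : PowerSeries A) (n : ℕ) :
    PowerSeries.coeff n (PSInv s) = invCoeff s n :=
  PowerSeries.coeff_mk _ _

lemma constantCoeff_PSInv (s : PowerSeries A) :
    PowerSeries.constantCoeff (PSInv s) = 1 := by
  rw [← PowerSeries.coeff_zero_eq_constantCoeff, coeff_PSInv, invCoeff]

lemma PSInv_mul (s : PowerSeries A) (h : PowerSeries.constantCoeff s = 1) :
    PSInv s * s = 1 := by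
  ext n
  rw [PowerSeries.coeff_mul]
  cases n with
  | zero =>
      rw [Finset.Nat.antidiagonal_zero]
      simp only [Finset.sum_singleton, coeff_PSInv, PowerSeries.coeff_zero_eq_constantCoeff, h]
      rw [invCoeff]
      simp
  | succ n =>
      rw [Finset.Nat.sum_antidiagonal_eq_sum_range_succ_mk, Finset.sum_range_succ]
      have hlast : PowerSeries.coeff (n + 1 - (n+1)) s = 1 := by
        rw [Nat.sub_self, PowerSeries.coeff_zero_eq_constantCoeff, h]
      rw [hlast, mul_one, coeff_PSInv, invCoeff]
      have hsum : ∑ i ∈ Finset.range (n+1),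
          PowerSeries.coeff i (PSInv s) * PowerSeries.coeff (n + 1 - i) s =
          ∑ j : Fin (n+1), invCoeff s j.1 * PowerSeries.coeff (n + 1 - j.1) s := by
        rw [← Finset.sum_range fun i => invCoeff s i * PowerSeries.coeff (n + 1 - i) s]
        exact Finset.sum_congr rfl fun i _ => by rw [coeff_PSInv]
      rw [hsum, PowerSeries.coeff_one, if_neg (Nat.succ_ne_zero n)]
      abel

lemma mul_PSInv (s : PowerSeries A) (h : PowerSeries.constantCoeff s = 1) :
    s * PSInv s = 1 := by
  have h1 := PSInv_mul s h
  have h2 := PSInv_mul (PSInv s) (constantCoeff_PSInv s)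
  calc s * PSInv s = (PSInv (PSInv s) * PSInv s) * (s * PSInv s) := by rw [h2, one_mul]
    _ = PSInv (PSInv s) * ((PSInv s * s) * PSInv s) := by
        rw [mul_assoc, ← mul_assoc (PSInv s) s (PSInv s)]
    _ = PSInv (PSInv s) * PSInv s := by rw [h1, one_mul]
    _ = 1 := h2

lemma PSInv_unique {s t : PowerSeries A} (hs : PowerSeries.constantCoeff s = 1)
    (h : s * t = 1) : PSInv s = t := by
  calc PSInv s = PSInv s * (s * t) := by rw [h, mul_one]
    _ = (PSInv s * s) * t := by rw [mul_assoc]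
    _ = t := by rw [PSInv_mul s hs, one_mul]

lemma commute_of_coeff {s t : PowerSeries A}
    (h : ∀ i j, Commute (PowerSeries.coeff i s) (PowerSeries.coeff j t)) :
    s * t = t * s := by
  ext n
  simp only [PowerSeries.coeff_mul, Finset.Nat.sum_antidiagonal_eq_sum_range_succ_mk]
  rw [← Finset.sum_range_reflect
    (fun i => PowerSeries.coeff i t * PowerSeries.coeff (n - i) s) (n+1)]
  refine Finset.sum_congr rfl fun i hi => ?_
  rw [Finset.mem_range] at hi
  have e1 : n + 1 - 1 - i = n - i := by omega
  have e2 : n - (n - i) = i := by omega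
  rw [e1, e2]
  exact (h i (n - i)).eq

lemma central_series_commute (b : A) (hb : ∀ x : A, Commute b x) (c : k)
    (t : PowerSeries A) : myExp k (c • b) * t = t * myExp k (c • b) := by
  refine commute_of_coeff fun i j => ?_
  rw [coeff_myExp]
  have h1 : Commute ((c • b) ^ i) (PowerSeries.coeff j t) := by
    refine Commute.pow_left ?_ i
    rw [Commute, SemiconjBy, smul_mul_assoc, mul_smul_comm, (hb _).eq]
  exact Commute.smul_left h1 _

lemma shiftL {φ : NC k 2} (hφ : IsGroupLike φ) (s p q : A) (hs : ∀ x : A, Commute s x) :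
    substPS φ (lin (s + p)) (lin q) = myExp k ((φ [0]) • s) * substPS φ (lin p) (lin q) := by
  ext n
  rw [substPS_lin, PowerSeries.coeff_mul, Finset.Nat.sum_antidiagonal_eq_sum_range_succ_mk,
    coreL hφ s p q hs n]
  refine Finset.sum_congr rfl fun j hj => ?_
  rw [coeff_myExp, substPS_lin, smul_pow, smul_smul, smul_mul_assoc]

lemma shiftR {φ : NC k 2} (hφ : IsGroupLike φ) (s p q : A) (hs : ∀ x : A, Commute s x) :
    substPS φ (lin p) (lin (s + q)) = myExp k ((φ [1]) • s) * substPS φ (lin p) (lin q) := by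
  ext n
  rw [substPS_lin, PowerSeries.coeff_mul, Finset.Nat.sum_antidiagonal_eq_sum_range_succ_mk,
    coreR hφ s p q hs n]
  refine Finset.sum_congr rfl fun j hj => ?_
  rw [coeff_myExp, substPS_lin, smul_pow, smul_smul, smul_mul_assoc]

lemma map_lin (f : A →ₐ[k] B) (a : A) :
    PowerSeries.map (f : A →+* B) (lin a) = lin (f a) := by
  ext n
  rw [PowerSeries.coeff_map, coeff_lin, coeff_lin]
  split <;> simp

lemma map_substPS (f : A →ₐ[k] B) (φ : NC k 2) (p q : A) :
    PowerSeries.map (f : A →+* B) (substPS φ (lin p) (lin q)) =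
      substPS φ (lin (f p)) (lin (f q)) := by
  ext n
  rw [PowerSeries.coeff_map, substPS_lin, substPS_lin]
  simp only [AlgHom.coe_toRingHom]
  have e0 : (⇑f) (Wsum n (fun w : List (Fin 2) => φ w • ((w.map ![p,q]).prod))) =
      Wsum n (fun w : List (Fin 2) => f (φ w • ((w.map ![p,q]).prod))) :=
    Wsum_hom (AddMonoidHom.mk' (⇑f) (map_add f)) n _
  rw [e0]
  refine Wsum_congr fun w => ?_
  rw [map_smul, map_list_prod, List.map_map]
  have : (⇑f ∘ ![p, q] : Fin 2 → B) = ![f p, f q] := by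
    funext i
    fin_cases i <;> simp
  rw [this]

lemma map_myExp (f : A →ₐ[k] B) (b : A) :
    PowerSeries.map (f : A →+* B) (myExp k b) = myExp k (f b) := by
  ext n
  rw [PowerSeries.coeff_map, coeff_myExp, coeff_myExp]
  simp only [AlgHom.coe_toRingHom]
  rw [map_smul, map_pow]

lemma map_PSInv (f : A →+* B) (s : PowerSeries A)
    (h : PowerSeries.constantCoeff s = 1) :
    PowerSeries.map f (PSInv s) = PSInv (PowerSeries.map f s) := by
  have hc : PowerSeries.constantCoeff (PowerSeries.map f s) = 1 := by
    rw [← PowerSeries.coeff_zero_eq_constantCoeff] at h ⊢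
    rw [PowerSeries.coeff_map, h, map_one]
  refine (PSInv_unique hc ?_).symm
  rw [← map_mul, mul_PSInv s h, map_one]

end PS2


section Homs
variable {k : Type*} [Field k] {C : Type*} [Ring C] [Algebra k C]

lemma comm_of_sum_zero {a b : C} (h : a + b = 0) : a * b = b * a := by
  have hb : b = -a := by
    have := neg_eq_of_add_eq_zero_right h
    rw [← this]
  rw [hb, mul_neg, neg_mul]

/-- symmetric value matrix for a projection of `U𝔞₃`. -/
noncomputable def mval (u v w : C) (i j : Fin 3) : C :=
  if i = j then 0 else if i.val + j.val = 1 then u else if i.val + j.val = 2 then v else w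

noncomputable def rho (u v w : C) (hsum : u + v + w = 0) : AA k 3 →ₐ[k] C :=
  RingQuot.liftAlgHom k (s := ARel k 3)
    ⟨FreeAlgebra.lift k (fun p : Fin 3 × Fin 3 => mval u v w p.1 p.2), by
      intro x y hrel
      induction hrel with
      | diag i =>
          rw [map_zero, FreeAlgebra.lift_ι_apply]
          simp [mval]
      | symm i j =>
          rw [FreeAlgebra.lift_ι_apply, FreeAlgebra.lift_ι_apply]
          fin_cases i <;> fin_cases j <;> simp [mval]
      | comm3 i j l hd =>
          obtain ⟨h1, h2, h3⟩ := hd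
          rw [map_mul, map_mul, map_add]
          simp only [FreeAlgebra.lift_ι_apply]
          fin_cases i <;> fin_cases j <;> fin_cases l <;> simp_all [mval] <;>
            exact comm_of_sum_zero (by rw [← hsum]; abel)
      | comm4 i j l m hd =>
          obtain ⟨h1, h2, h3, h4, h5, h6⟩ := hd
          exfalso
          fin_cases i <;> fin_cases j <;> fin_cases l <;> fin_cases m <;> simp_all⟩

lemma rho_tg (u v w : C) (hsum : u + v + w = 0) (i j : Fin 3) :
    rho u v w hsum (tg k 3 i j) = mval u v w i j := by
  rw [tg, rho, RingQuot.liftAlgHom_mkAlgHom_apply, FreeAlgebra.lift_ι_apply]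

lemma rho_tg01 (u v w : C) (hsum : u + v + w = 0) :
    rho u v w hsum (tg k 3 0 1) = u := by rw [rho_tg]; rfl

lemma rho_tg02 (u v w : C) (hsum : u + v + w = 0) :
    rho u v w hsum (tg k 3 0 2) = v := by rw [rho_tg]; rfl

lemma rho_tg12 (u v w : C) (hsum : u + v + w = 0) :
    rho u v w hsum (tg k 3 1 2) = w := by rw [rho_tg]; rfl

lemma tg_symm (i j : Fin 3) : tg k 3 i j = tg k 3 j i :=
  RingQuot.mkAlgHom_rel k (ARel.symm i j)

lemma tg_diag (i : Fin 3) : tg k 3 i i = 0 := by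
  have h : (RingQuot.mkAlgHom k (ARel k 3)) (FreeAlgebra.ι k (i, i)) =
      (RingQuot.mkAlgHom k (ARel k 3)) 0 := RingQuot.mkAlgHom_rel k (ARel.diag i)
  rw [map_zero] at h
  exact h

lemma comm3_tg (i j l : Fin 3) (h : i ≠ j ∧ i ≠ l ∧ j ≠ l) :
    Commute (tg k 3 i j) (tg k 3 i l + tg k 3 j l) := by
  have h2 : (RingQuot.mkAlgHom k (ARel k 3))
        (FreeAlgebra.ι k (i, j) * (FreeAlgebra.ι k (i, l) + FreeAlgebra.ι k (j, l))) =
      (RingQuot.mkAlgHom k (ARel k 3))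
        ((FreeAlgebra.ι k (i, l) + FreeAlgebra.ι k (j, l)) * FreeAlgebra.ι k (i, j)) :=
    RingQuot.mkAlgHom_rel k (ARel.comm3 i j l h)
  rw [map_mul, map_mul, map_add] at h2
  exact h2

/-- The central element `t₀₁ + t₀₂ + t₁₂` of `U𝔞₃`. -/
noncomputable def C0 (k : Type*) [Field k] : AA k 3 :=
  tg k 3 0 1 + tg k 3 0 2 + tg k 3 1 2

lemma C0_commute_tg (i j : Fin 3) : Commute (C0 k) (tg k 3 i j) := by
  have h01 : Commute (tg k 3 0 1) (C0 k) := by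
    rw [C0, add_assoc]
    exact (Commute.refl _).add_right (comm3_tg 0 1 2 ⟨by decide, by decide, by decide⟩)
  have h02 : Commute (tg k 3 0 2) (C0 k) := by
    have hc := comm3_tg (k := k) 0 2 1 ⟨by decide, by decide, by decide⟩
    rw [tg_symm 2 1] at hc
    have : C0 k = tg k 3 0 2 + (tg k 3 0 1 + tg k 3 1 2) := by rw [C0]; abel
    rw [this]
    exact (Commute.refl _).add_right hc
  have h12 : Commute (tg k 3 1 2) (C0 k) := by
    have hc := comm3_tg (k := k) 1 2 0 ⟨by decide, by decide, by decide⟩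
    rw [tg_symm 1 0, tg_symm 2 0] at hc
    have : C0 k = tg k 3 1 2 + (tg k 3 0 1 + tg k 3 0 2) := by rw [C0]; abel
    rw [this]
    exact (Commute.refl _).add_right hc
  fin_cases i <;> fin_cases j <;>
    simp only [Fin.isValue] <;>
    first
      | (rw [tg_diag]; exact Commute.zero_right _)
      | exact h01.symm
      | exact h02.symm
      | exact h12.symm
      | (rw [tg_symm]; exact h01.symm)
      | (rw [tg_symm]; exact h02.symm)
      | (rw [tg_symm]; exact h12.symm)

lemma C0_central (x : AA k 3) : Commute (C0 k) x := by
  obtain ⟨y, rfl⟩ := RingQuot.mkAlgHom_surjective k (ARel k 3) x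
  induction y using FreeAlgebra.induction with
  | grade0 r =>
      rw [AlgHom.commutes]
      exact (Algebra.commutes r (C0 k)).symm
  | grade1 p => exact C0_commute_tg p.1 p.2
  | mul a b ha hb =>
      rw [map_mul]
      exact ha.mul_right hb
  | add a b ha hb =>
      rw [map_add]
      exact ha.add_right hb

end Homs


section UnitsLayer
variable {k : Type*} [Field k] [CharZero k] {A : Type*} [Ring A] [Algebra k A]
  {B : Type*} [Ring B] [Algebra k B]

noncomputable def unitOf (s : PowerSeries A) (h : PowerSeries.constantCoeff s = 1) :
    (PowerSeries A)ˣ := ⟨s, PSInv s, mul_PSInv s h, PSInv_mul s h⟩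

lemma unitOf_val (s : PowerSeries A) (h : PowerSeries.constantCoeff s = 1) :
    (unitOf s h : PowerSeries A) = s := rfl

lemma unitOf_inv_val (s : PowerSeries A) (h : PowerSeries.constantCoeff s = 1) :
    (((unitOf s h)⁻¹ : (PowerSeries A)ˣ) : PowerSeries A) = PSInv s := rfl

noncomputable def uP (φ : NC k 2) (hc : φ [] = 1) (α β : A) : (PowerSeries A)ˣ :=
  unitOf (substPS φ (lin α) (lin β)) (constantCoeff_substPS_lin φ hc α β)

noncomputable def uE (k : Type*) [Field k] [CharZero k] {A : Type*} [Ring A] [Algebra k A]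
    (b : A) : (PowerSeries A)ˣ := unitOf (myExp k b) (constantCoeff_myExp b)

lemma uP_val (φ : NC k 2) (hc : φ [] = 1) (α β : A) :
    (uP φ hc α β : PowerSeries A) = substPS φ (lin α) (lin β) := rfl

lemma uP_inv_val (φ : NC k 2) (hc : φ [] = 1) (α β : A) :
    (((uP φ hc α β)⁻¹ : _ˣ) : PowerSeries A) = PSInv (substPS φ (lin α) (lin β)) := rfl

lemma uE_val (b : A) : (uE k b : PowerSeries A) = myExp k b := rfl

lemma uE_mul {b c : A} (h : Commute b c) : uE k b * uE k c = uE k (b + c) :=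
  Units.ext (myExp_mul h)

lemma uE_neg (b : A) : uE k (-b) = (uE k b)⁻¹ := by
  refine eq_inv_of_mul_eq_one_left (Units.ext ?_)
  show myExp k (-b) * myExp k b = 1
  rw [myExp_mul ((Commute.refl b).neg_left), neg_add_cancel, myExp_zero]

lemma hex1_iff_units {μ : k} {φ : NC k 2} (hc : φ [] = 1) (a b c : A) :
    Hex1 k μ φ a b c ↔ uE k ((μ/2) • (b + c)) =
      uP φ hc b a * uE k ((μ/2) • b) * (uP φ hc b c)⁻¹ * uE k ((μ/2) • c) * uP φ hc a c := by
  unfold Hex1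
  rw [← lin_add, lin_smul, expPS_lin, lin_smul, expPS_lin, lin_smul, expPS_lin, Units.ext_iff]
  simp only [Units.val_mul, uP_val, uP_inv_val, uE_val]

lemma hex2_iff_units {μ : k} {φ : NC k 2} (hc : φ [] = 1) (a b c : A) :
    Hex2 k μ φ a b c ↔ uE k ((μ/2) • (a + b)) =
      (uP φ hc c b)⁻¹ * uE k ((μ/2) • b) * uP φ hc a b * uE k ((μ/2) • a) *
        (uP φ hc a c)⁻¹ := by
  unfold Hex2
  rw [← lin_add, lin_smul, expPS_lin, lin_smul, expPS_lin, lin_smul, expPS_lin, Units.ext_iff]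
  simp only [Units.val_mul, uP_val, uP_inv_val, uE_val]

lemma hex1_map {μ : k} {φ : NC k 2} (f : A →ₐ[k] B) (hc : φ [] = 1) {a b c : A}
    (h : Hex1 k μ φ a b c) : Hex1 k μ φ (f a) (f b) (f c) := by
  rw [hex1_iff_units hc] at h ⊢
  have hm := congrArg (PowerSeries.map (f : A →+* B)) (congrArg Units.val h)
  simp only [Units.val_mul, uP_val, uP_inv_val, uE_val] at hm
  rw [map_mul, map_mul, map_mul, map_mul, map_myExp, map_myExp, map_myExp, map_substPS,
    map_PSInv _ _ (constantCoeff_substPS_lin φ hc b c), map_substPS, map_substPS] at hm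
  refine Units.ext ?_
  simp only [Units.val_mul, uP_val, uP_inv_val, uE_val]
  rw [show (μ/2) • (f b + f c) = f ((μ/2) • (b + c)) by rw [map_smul, map_add],
    show (μ/2) • (f b) = f ((μ/2) • b) by rw [map_smul],
    show (μ/2) • (f c) = f ((μ/2) • c) by rw [map_smul]]
  exact hm

lemma hex2_map {μ : k} {φ : NC k 2} (f : A →ₐ[k] B) (hc : φ [] = 1) {a b c : A}
    (h : Hex2 k μ φ a b c) : Hex2 k μ φ (f a) (f b) (f c) := by
  rw [hex2_iff_units hc] at h ⊢
  have hm := congrArg (PowerSeries.map (f : A →+* B)) (congrArg Units.val h)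
  simp only [Units.val_mul, uP_val, uP_inv_val, uE_val] at hm
  rw [map_mul, map_mul, map_mul, map_mul, map_myExp, map_myExp, map_myExp,
    map_PSInv _ _ (constantCoeff_substPS_lin φ hc c b), map_substPS,
    map_PSInv _ _ (constantCoeff_substPS_lin φ hc a c), map_substPS, map_substPS] at hm
  refine Units.ext ?_
  simp only [Units.val_mul, uP_val, uP_inv_val, uE_val]
  rw [show (μ/2) • (f a + f b) = f ((μ/2) • (a + b)) by rw [map_smul, map_add],
    show (μ/2) • (f b) = f ((μ/2) • b) by rw [map_smul],
    show (μ/2) • (f a) = f ((μ/2) • a) by rw [map_smul]]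
  exact hm

/-- abstract 2-cycle relation at a pair of elements. -/
def TwoAt (φ : NC k 2) (x y : A) : Prop :=
  substPS φ (lin x) (lin y) * substPS φ (lin y) (lin x) = 1

/-- abstract 3-cycle relation at a pair of elements. -/
def ThreeAt (μ : k) (φ : NC k 2) (x y : A) : Prop :=
  myExp k ((μ/2) • x) * substPS φ (lin (-x-y)) (lin x) * myExp k ((μ/2) • (-x-y)) *
    substPS φ (lin y) (lin (-x-y)) * myExp k ((μ/2) • y) * substPS φ (lin x) (lin y) = 1

lemma TwoAt_iff_units {φ : NC k 2} (hc : φ [] = 1) (x y : A) :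
    TwoAt φ x y ↔ uP φ hc x y * uP φ hc y x = 1 := by
  unfold TwoAt
  rw [Units.ext_iff]
  simp only [Units.val_mul, uP_val, Units.val_one]

lemma ThreeAt_iff_units {μ : k} {φ : NC k 2} (hc : φ [] = 1) (x y : A) :
    ThreeAt μ φ x y ↔
      uE k ((μ/2) • x) * uP φ hc (-x-y) x * uE k ((μ/2) • (-x-y)) *
        uP φ hc y (-x-y) * uE k ((μ/2) • y) * uP φ hc x y = 1 := by
  unfold ThreeAt
  rw [Units.ext_iff]
  simp only [Units.val_mul, uP_val, uE_val, Units.val_one]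

lemma TwoAt_map {φ : NC k 2} (f : A →ₐ[k] B) {x y : A} (h : TwoAt φ x y) :
    TwoAt φ (f x) (f y) := by
  unfold TwoAt at h ⊢
  have hm := congrArg (PowerSeries.map (f : A →+* B)) h
  rw [map_mul, map_one, map_substPS, map_substPS] at hm
  exact hm

lemma ThreeAt_map {μ : k} {φ : NC k 2} (f : A →ₐ[k] B) {x y : A} (h : ThreeAt μ φ x y) :
    ThreeAt μ φ (f x) (f y) := by
  unfold ThreeAt at h ⊢
  have hm := congrArg (PowerSeries.map (f : A →+* B)) h
  rw [map_mul, map_mul, map_mul, map_mul, map_mul, map_one, map_myExp, map_myExp, map_myExp,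
    map_substPS, map_substPS, map_substPS] at hm
  rw [show f ((μ/2) • x) = (μ/2) • (f x) by rw [map_smul],
    show f ((μ/2) • y) = (μ/2) • (f y) by rw [map_smul],
    show f ((μ/2) • (-x-y)) = (μ/2) • (-(f x)-(f y)) by rw [map_smul, map_sub, map_neg],
    show f (-x-y) = -(f x)-(f y) by rw [map_sub, map_neg]] at hm
  exact hm

end UnitsLayer


section GroupLemmas
variable {G : Type*} [Group G]

lemma hex_fwd (Qx Qy Qz Pxy Pyx Pxz Pzx Pyz : G)
    (h1 : Qy⁻¹ = Pxy * Qx * Pxz⁻¹ * Qz * Pyz)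
    (h2 : Qz⁻¹ = Pyz * Qy * Pyx⁻¹ * Qx * Pzx)
    (h3 : Qx⁻¹ = Pxz⁻¹ * Qz * Pyz * Qy * Pyx⁻¹) :
    Qx * Pzx * Qz * Pyz * Qy * Pxy = 1 ∧ Pxy * Pyx = 1 := by
  have e1 : Pxz⁻¹ = Qx⁻¹ * Pxy⁻¹ * Qy⁻¹ * Pyz⁻¹ * Qz⁻¹ := by rw [h1]; group
  have e4 : Pyx⁻¹ = Qy⁻¹ * Pyz⁻¹ * Qz⁻¹ * Pzx⁻¹ * Qx⁻¹ := by rw [h2]; group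
  have key : Pxy⁻¹ * Qy⁻¹ * Pyz⁻¹ * Qz⁻¹ * Pzx⁻¹ * Qx⁻¹ = 1 := by
    calc Pxy⁻¹ * Qy⁻¹ * Pyz⁻¹ * Qz⁻¹ * Pzx⁻¹ * Qx⁻¹
        = Qx * ((Qx⁻¹ * Pxy⁻¹ * Qy⁻¹ * Pyz⁻¹ * Qz⁻¹) * Qz * Pyz * Qy *
            (Qy⁻¹ * Pyz⁻¹ * Qz⁻¹ * Pzx⁻¹ * Qx⁻¹)) := by group
      _ = Qx * (Pxz⁻¹ * Qz * Pyz * Qy * Pyx⁻¹) := by rw [← e1, ← e4]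
      _ = Qx * Qx⁻¹ := by rw [← h3]
      _ = 1 := by group
  have three : Qx * Pzx * Qz * Pyz * Qy * Pxy = 1 := by
    have h : Qx * Pzx * Qz * Pyz * Qy * Pxy =
        (Pxy⁻¹ * Qy⁻¹ * Pyz⁻¹ * Qz⁻¹ * Pzx⁻¹ * Qx⁻¹)⁻¹ := by group
    rw [h, key, inv_one]
  refine ⟨three, ?_⟩
  have hyx : Pyx = Qx * Pzx * Qz * Pyz * Qy := by
    rw [show Pyx = (Pyx⁻¹)⁻¹ from (inv_inv _).symm, e4]
    group
  have hPxyinv : Qx * Pzx * Qz * Pyz * Qy = Pxy⁻¹ :=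
    eq_inv_of_mul_eq_one_left three
  rw [hyx, hPxyinv]
  group

lemma hex_back (Qx Qy Qz Pxy Pyx Pxz Pzx Pyz Pzy : G)
    (h3 : Qx * Pzx * Qz * Pyz * Qy * Pxy = 1)
    (h3s : Qy * Pzy * Qz * Pxz * Qx * Pyx = 1)
    (h2 : Pxy * Pyx = 1) (h2' : Pyz * Pzy = 1) :
    Qx⁻¹ = Pzx * Qz * Pzy⁻¹ * Qy * Pxy ∧
      Qy⁻¹ = Pyz⁻¹ * Qz * Pxz * Qx * Pxy⁻¹ := by
  have hzy : Pzy⁻¹ = Pyz := inv_eq_of_mul_eq_one_left h2'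
  have hyx : Pyx = Pxy⁻¹ := eq_inv_of_mul_eq_one_right h2
  constructor
  · rw [hzy]
    have e : Qx⁻¹ = Qx⁻¹ * (Qx * Pzx * Qz * Pyz * Qy * Pxy) := by rw [h3, mul_one]
    rw [e]
    group
  · have e : Qy⁻¹ = Qy⁻¹ * (Qy * Pzy * Qz * Pxz * Qx * Pyx) := by rw [h3s, mul_one]
    rw [e, hyx, ← hzy]
    group

lemma conj_of_comm {e : G} (he : ∀ g : G, e * g = g * e) (X : G) : e * X * e⁻¹ = X := by
  rw [he X]
  group

lemma conj_of_comm' {e : G} (he : ∀ g : G, e * g = g * e) (X : G) : e⁻¹ * X * e = X := by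
  rw [show (e⁻¹ * X) * e = e * (e⁻¹ * X) from (he _).symm]
  group

lemma hex1_assemble (Ec Eu Qa Qz Qc Uza Uzc Uac : G)
    (hEc : ∀ g : G, Ec * g = g * Ec) (hEu : ∀ g : G, Eu * g = g * Eu)
    (hR1 : Qa⁻¹ = Uza * Qz * Uzc⁻¹ * Qc * Uac) :
    Ec * Qa⁻¹ = (Eu * Uza) * (Ec * Qz) * (Eu * Uzc)⁻¹ * Qc * Uac := by
  rw [hR1, mul_inv_rev]
  symm
  calc Eu * Uza * (Ec * Qz) * (Uzc⁻¹ * Eu⁻¹) * Qc * Uac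
      = (Eu * Uza) * Ec * (Qz * Uzc⁻¹ * Eu⁻¹ * (Qc * Uac)) := by group
    _ = Ec * (Eu * Uza) * (Qz * Uzc⁻¹ * Eu⁻¹ * (Qc * Uac)) := by rw [← hEc (Eu * Uza)]
    _ = Ec * (Eu * (Uza * Qz * Uzc⁻¹) * Eu⁻¹ * (Qc * Uac)) := by group
    _ = Ec * ((Uza * Qz * Uzc⁻¹) * (Qc * Uac)) := by rw [conj_of_comm hEu]
    _ = Ec * (Uza * Qz * Uzc⁻¹ * Qc * Uac) := by group

lemma hex2_assemble (Ec Eb Qa Qz Qc Ucz Uaz Uac : G)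
    (hEc : ∀ g : G, Ec * g = g * Ec) (hEb : ∀ g : G, Eb * g = g * Eb)
    (hR2 : Qc⁻¹ = Ucz⁻¹ * Qz * Uaz * Qa * Uac⁻¹) :
    Ec * Qc⁻¹ = (Eb * Ucz)⁻¹ * (Ec * Qz) * (Eb * Uaz) * Qa * Uac⁻¹ := by
  rw [hR2, mul_inv_rev]
  symm
  calc Ucz⁻¹ * Eb⁻¹ * (Ec * Qz) * (Eb * Uaz) * Qa * Uac⁻¹
      = (Ucz⁻¹ * Eb⁻¹) * Ec * (Qz * (Eb * Uaz) * Qa * Uac⁻¹) := by group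
    _ = Ec * (Ucz⁻¹ * Eb⁻¹) * (Qz * (Eb * Uaz) * Qa * Uac⁻¹) := by rw [← hEc (Ucz⁻¹ * Eb⁻¹)]
    _ = Ec * (Ucz⁻¹ * (Eb⁻¹ * Qz * Eb) * (Uaz * Qa * Uac⁻¹)) := by group
    _ = Ec * (Ucz⁻¹ * Qz * (Uaz * Qa * Uac⁻¹)) := by rw [conj_of_comm' hEb]
    _ = Ec * (Ucz⁻¹ * Qz * Uaz * Qa * Uac⁻¹) := by group
end GroupLemmas


section Final
variable {k : Type*} [Field k] [CharZero k] {B : Type*} [Ring B] [Algebra k B]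

noncomputable def xg (k : Type*) [Field k] : FreeAlgebra k (Fin 2) := FreeAlgebra.ι k 0

noncomputable def yg (k : Type*) [Field k] : FreeAlgebra k (Fin 2) := FreeAlgebra.ι k 1

noncomputable def zg (k : Type*) [Field k] : FreeAlgebra k (Fin 2) := -xg k - yg k

lemma XF_eq : XF k = lin (xg k) := rfl

lemma YF_eq : YF k = lin (yg k) := rfl

lemma ZF_eq : ZF k = lin (zg k) := by
  rw [ZF, XF_eq, YF_eq, zg, sub_eq_add_neg, sub_eq_add_neg, lin_add, lin_neg, lin_neg]

lemma twoCycle_iff (φ : NC k 2) : TwoCycleMul k φ ↔ TwoAt φ (xg k) (yg k) := by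
  unfold TwoCycleMul TwoAt
  rw [XF_eq, YF_eq]

lemma threeCycle_iff (μ : k) (φ : NC k 2) :
    ThreeCycleMul k μ φ ↔ ThreeAt μ φ (xg k) (yg k) := by
  unfold ThreeCycleMul ThreeAt
  rw [XF_eq, YF_eq, ZF_eq, lin_smul, lin_smul, lin_smul, expPS_lin, expPS_lin, expPS_lin,
    show zg k = -xg k - yg k from rfl]

lemma lift_x (α β : B) : (FreeAlgebra.lift k ![α, β]) (xg k) = α := by
  rw [xg, FreeAlgebra.lift_ι_apply]
  simp

lemma lift_y (α β : B) : (FreeAlgebra.lift k ![α, β]) (yg k) = β := by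
  rw [yg, FreeAlgebra.lift_ι_apply]
  simp

lemma lift_z (α β : B) : (FreeAlgebra.lift k ![α, β]) (zg k) = -α - β := by
  rw [zg, map_sub, map_neg, lift_x, lift_y]

end Final

end Aux

/-- For group-like `φ` and `μ ∈ k`, the two hexagon equations in the completed
`U𝔞₃` (with `t₁₂ = t 0 1`, `t₁₃ = t 0 2`, `t₂₃ = t 1 2`) hold if and only if
`φ` satisfies the 2-cycle relation `φ(X,Y)φ(Y,X)=1` and the 3-cycle relation
`e^{μX/2}φ(Z,X)e^{μZ/2}φ(Y,Z)e^{μY/2}φ(X,Y)=1`, `X+Y+Z=0`, in `k⟨⟨X,Y⟩⟩`. -/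
theorem statement10 (k : Type*) [Field k] [CharZero k] (φ : NC k 2)
    (hφ : IsGroupLike φ) (μ : k) :
    (Hex1 k μ φ (tg k 3 0 1) (tg k 3 0 2) (tg k 3 1 2) ∧
      Hex2 k μ φ (tg k 3 0 1) (tg k 3 0 2) (tg k 3 1 2)) ↔
      (TwoCycleMul k φ ∧ ThreeCycleMul k μ φ) := by
  have hc : φ [] = 1 := hφ.1
  constructor
  · rintro ⟨hh1, hh2⟩
    have hsum1 : yg k + xg k + zg k = 0 := by rw [zg]; abel
    have hsum2 : zg k + yg k + xg k = 0 := by rw [zg]; abel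
    have hsum3 : yg k + zg k + xg k = 0 := by rw [zg]; abel
    have p1 : Hex1 k μ φ (yg k) (xg k) (zg k) := by
      have h := hex1_map (rho (yg k) (xg k) (zg k) hsum1) hc hh1
      rwa [rho_tg01, rho_tg02, rho_tg12] at h
    have p2 : Hex1 k μ φ (zg k) (yg k) (xg k) := by
      have h := hex1_map (rho (zg k) (yg k) (xg k) hsum2) hc hh1
      rwa [rho_tg01, rho_tg02, rho_tg12] at h
    have p3 : Hex2 k μ φ (yg k) (zg k) (xg k) := by
      have h := hex2_map (rho (yg k) (zg k) (xg k) hsum3) hc hh2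
      rwa [rho_tg01, rho_tg02, rho_tg12] at h
    have u1 := (hex1_iff_units hc (yg k) (xg k) (zg k)).mp p1
    rw [show (μ/2 : k) • (xg k + zg k) = -((μ/2 : k) • yg k) by
        rw [show xg k + zg k = -(yg k) by rw [zg]; abel, smul_neg], uE_neg] at u1
    have u2 := (hex1_iff_units hc (zg k) (yg k) (xg k)).mp p2
    rw [show (μ/2 : k) • (yg k + xg k) = -((μ/2 : k) • zg k) by
        rw [show yg k + xg k = -(zg k) by rw [zg]; abel, smul_neg], uE_neg] at u2
    have u3 := (hex2_iff_units hc (yg k) (zg k) (xg k)).mp p3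
    rw [show (μ/2 : k) • (yg k + zg k) = -((μ/2 : k) • xg k) by
        rw [show yg k + zg k = -(xg k) by rw [zg]; abel, smul_neg], uE_neg] at u3
    obtain ⟨three, two⟩ := hex_fwd (uE k ((μ/2 : k) • xg k)) (uE k ((μ/2 : k) • yg k))
      (uE k ((μ/2 : k) • zg k)) (uP φ hc (xg k) (yg k)) (uP φ hc (yg k) (xg k))
      (uP φ hc (xg k) (zg k)) (uP φ hc (zg k) (xg k)) (uP φ hc (yg k) (zg k)) u1 u2 u3
    constructor
    · rw [twoCycle_iff, TwoAt_iff_units hc]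
      exact two
    · rw [threeCycle_iff, ThreeAt_iff_units hc]
      exact three
  · rintro ⟨h2c, h3c⟩
    have s2 : TwoAt φ (xg k) (yg k) := (twoCycle_iff φ).mp h2c
    have s3 : ThreeAt μ φ (xg k) (yg k) := (threeCycle_iff μ φ).mp h3c
    have s3s : ThreeAt μ φ (yg k) (xg k) := by
      have h := ThreeAt_map (FreeAlgebra.lift k ![yg k, xg k]) s3
      rwa [lift_x, lift_y] at h
    have s2' : TwoAt φ (yg k) (zg k) := by
      have h := TwoAt_map (FreeAlgebra.lift k ![yg k, zg k]) s2
      rwa [lift_x, lift_y] at h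
    have U3 : uE k ((μ/2 : k) • xg k) * uP φ hc (zg k) (xg k) * uE k ((μ/2 : k) • zg k) *
        uP φ hc (yg k) (zg k) * uE k ((μ/2 : k) • yg k) * uP φ hc (xg k) (yg k) = 1 :=
      (ThreeAt_iff_units hc (xg k) (yg k)).mp s3
    have U3s := (ThreeAt_iff_units hc (yg k) (xg k)).mp s3s
    rw [show -yg k - xg k = zg k by rw [zg]; abel] at U3s
    have U2 := (TwoAt_iff_units hc (xg k) (yg k)).mp s2
    have U2' := (TwoAt_iff_units hc (yg k) (zg k)).mp s2'
    obtain ⟨R1u, R2u⟩ := hex_back (uE k ((μ/2 : k) • xg k)) (uE k ((μ/2 : k) • yg k))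
      (uE k ((μ/2 : k) • zg k)) (uP φ hc (xg k) (yg k)) (uP φ hc (yg k) (xg k))
      (uP φ hc (xg k) (zg k)) (uP φ hc (zg k) (xg k)) (uP φ hc (yg k) (zg k))
      (uP φ hc (zg k) (yg k)) U3 U3s U2 U2'
    have w1 : Hex1 k μ φ (xg k) (zg k) (yg k) := by
      rw [hex1_iff_units hc]
      rw [show (μ/2 : k) • (zg k + yg k) = -((μ/2 : k) • xg k) by
        rw [show zg k + yg k = -(xg k) by rw [zg]; abel, smul_neg], uE_neg]
      exact R1u
    have w2 : Hex2 k μ φ (xg k) (zg k) (yg k) := by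
      rw [hex2_iff_units hc]
      rw [show (μ/2 : k) • (xg k + zg k) = -((μ/2 : k) • yg k) by
        rw [show xg k + zg k = -(yg k) by rw [zg]; abel, smul_neg], uE_neg]
      exact R2u
    have W1 : Hex1 k μ φ (tg k 3 0 1) (-(tg k 3 0 1) - tg k 3 1 2) (tg k 3 1 2) := by
      have h := hex1_map (FreeAlgebra.lift k ![tg k 3 0 1, tg k 3 1 2]) hc w1
      rwa [lift_x, lift_y, lift_z] at h
    have W2 : Hex2 k μ φ (tg k 3 0 1) (-(tg k 3 0 1) - tg k 3 1 2) (tg k 3 1 2) := by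
      have h := hex2_map (FreeAlgebra.lift k ![tg k 3 0 1, tg k 3 1 2]) hc w2
      rwa [lift_x, lift_y, lift_z] at h
    have V1 := (hex1_iff_units hc (tg k 3 0 1) (-(tg k 3 0 1) - tg k 3 1 2)
      (tg k 3 1 2)).mp W1
    rw [show (μ/2 : k) • ((-(tg k 3 0 1) - tg k 3 1 2) + tg k 3 1 2) =
        -((μ/2 : k) • tg k 3 0 1) by
      rw [show (-(tg k 3 0 1) - tg k 3 1 2) + tg k 3 1 2 = -(tg k 3 0 1) by abel,
        smul_neg], uE_neg] at V1
    have V2 := (hex2_iff_units hc (tg k 3 0 1) (-(tg k 3 0 1) - tg k 3 1 2)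
      (tg k 3 1 2)).mp W2
    rw [show (μ/2 : k) • (tg k 3 0 1 + (-(tg k 3 0 1) - tg k 3 1 2)) =
        -((μ/2 : k) • tg k 3 1 2) by
      rw [show tg k 3 0 1 + (-(tg k 3 0 1) - tg k 3 1 2) = -(tg k 3 1 2) by abel,
        smul_neg], uE_neg] at V2
    have hEcomm : ∀ (α : k) (g : (PowerSeries (AA k 3))ˣ),
        uE k (α • C0 k) * g = g * uE k (α • C0 k) := fun α g =>
      Units.ext (central_series_commute (C0 k) C0_central α g.val)
    have hb : tg k 3 0 2 = C0 k + (-(tg k 3 0 1) - tg k 3 1 2) := by rw [C0]; abel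
    have sb1 : uP φ hc (tg k 3 0 2) (tg k 3 0 1) =
        uE k (φ [0] • C0 k) * uP φ hc (-(tg k 3 0 1) - tg k 3 1 2) (tg k 3 0 1) := by
      refine Units.ext ?_
      simp only [Units.val_mul, uP_val, uE_val]
      rw [hb]
      exact shiftL hφ (C0 k) (-(tg k 3 0 1) - tg k 3 1 2) (tg k 3 0 1) C0_central
    have sb2 : uP φ hc (tg k 3 0 2) (tg k 3 1 2) =
        uE k (φ [0] • C0 k) * uP φ hc (-(tg k 3 0 1) - tg k 3 1 2) (tg k 3 1 2) := by
      refine Units.ext ?_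
      simp only [Units.val_mul, uP_val, uE_val]
      rw [hb]
      exact shiftL hφ (C0 k) (-(tg k 3 0 1) - tg k 3 1 2) (tg k 3 1 2) C0_central
    have sc1 : uP φ hc (tg k 3 1 2) (tg k 3 0 2) =
        uE k (φ [1] • C0 k) * uP φ hc (tg k 3 1 2) (-(tg k 3 0 1) - tg k 3 1 2) := by
      refine Units.ext ?_
      simp only [Units.val_mul, uP_val, uE_val]
      rw [hb]
      exact shiftR hφ (C0 k) (tg k 3 1 2) (-(tg k 3 0 1) - tg k 3 1 2) C0_central
    have sc2 : uP φ hc (tg k 3 0 1) (tg k 3 0 2) =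
        uE k (φ [1] • C0 k) * uP φ hc (tg k 3 0 1) (-(tg k 3 0 1) - tg k 3 1 2) := by
      refine Units.ext ?_
      simp only [Units.val_mul, uP_val, uE_val]
      rw [hb]
      exact shiftR hφ (C0 k) (tg k 3 0 1) (-(tg k 3 0 1) - tg k 3 1 2) C0_central
    have qb : uE k ((μ/2 : k) • tg k 3 0 2) =
        uE k ((μ/2 : k) • C0 k) * uE k ((μ/2 : k) • (-(tg k 3 0 1) - tg k 3 1 2)) := by
      rw [show (μ/2 : k) • tg k 3 0 2 =
        (μ/2 : k) • C0 k + (μ/2 : k) • (-(tg k 3 0 1) - tg k 3 1 2) by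
          rw [← smul_add, ← hb]]
      exact (uE_mul (((C0_central _).smul_right _).smul_left _)).symm
    constructor
    · rw [hex1_iff_units hc]
      rw [show (μ/2 : k) • (tg k 3 0 2 + tg k 3 1 2) =
          (μ/2 : k) • C0 k + -((μ/2 : k) • tg k 3 0 1) by
        rw [show tg k 3 0 2 + tg k 3 1 2 = C0 k + -(tg k 3 0 1) by rw [C0]; abel,
          smul_add, smul_neg]]
      rw [← uE_mul ((((C0_central _).smul_right _).neg_right).smul_left _), uE_neg]
      rw [sb1, qb, sb2]
      exact hex1_assemble _ _ _ _ _ _ _ _ (hEcomm (μ/2 : k)) (hEcomm (φ [0])) V1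
    · rw [hex2_iff_units hc]
      rw [show (μ/2 : k) • (tg k 3 0 1 + tg k 3 0 2) =
          (μ/2 : k) • C0 k + -((μ/2 : k) • tg k 3 1 2) by
        rw [show tg k 3 0 1 + tg k 3 0 2 = C0 k + -(tg k 3 1 2) by rw [C0]; abel,
          smul_add, smul_neg]]
      rw [← uE_mul ((((C0_central _).smul_right _).neg_right).smul_left _), uE_neg]
      rw [sc1, qb, sc2]
      exact hex2_assemble _ _ _ _ _ _ _ _ (hEcomm (μ/2 : k)) (hEcomm (φ [1])) V2
end
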